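/- arXiv:math/0701123 — 7 statements merged into one kernel-verified Lean document; each statement's English description precedes it below -/
import Mathlib

section
/- Let H be a Hilbert space, Γ a self-adjoint non-negative operator on H, and L a self-adjoint operator on H. Let φ^ε solve dφ/dt = (iL − εΓ)φ with φ^ε(0) = φ₀, and let φ⁰(t) = e^{iLt}φ₀. Assume there is b < ∞ such that ‖φ⁰(t)‖_{H¹(Γ)} ≤ b‖φ₀‖ for all t ≥ 0, where ‖ψ‖²_{H¹(Γ)} = ⟨Γψ, ψ⟩. Then for all t ≥ 0, ‖φ^ε(t) − φ⁰(t)‖² ≤ 4b √(εt) ‖φ₀‖². -/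
/-!
Write `Q ψ = re ⟪Γ ψ, ψ⟫`. Along the two flows, `f = ‖φ^ε - φ⁰‖²` has derivative
`-2ε re ⟪φ^ε - φ⁰, Γ φ^ε⟫`, since the skew-adjoint part `iL` drops out of real parts; expanding
`0 ≤ Q (2φ^ε - φ⁰)` bounds this by `ε Q(φ⁰) / 2 ≤ ε b² ‖φ₀‖² / 2`. Integrating,
`f t ≤ r² ‖φ₀‖² / 2` with `r = b √(εt)`. On the other hand the free flow preserves the norm and
the dissipative flow decreases it, so `f t ≤ 4 ‖φ₀‖²`; and `min (r² / 2) 4 ≤ 4 r`.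
-/

open scoped InnerProductSpace

section Positive

open RCLike

variable {𝕜 E : Type*} [RCLike 𝕜] [NormedAddCommGroup E] [InnerProductSpace 𝕜 E]

theorem ContinuousLinearMap.IsPositive.re_inner_two_smul_sub_apply {T : E →L[𝕜] E}
    (hT : T.IsPositive) (x y : E) :
    re ⟪T ((2 : 𝕜) • x - y), (2 : 𝕜) • x - y⟫_𝕜 = 4 * re ⟪x - y, T x⟫_𝕜 + re ⟪T y, y⟫_𝕜 := by
  have hxx : re ⟪x, T x⟫_𝕜 = re ⟪T x, x⟫_𝕜 := by rw [hT.inner_left_eq_inner_right]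
  have hyx : re ⟪y, T x⟫_𝕜 = re ⟪T x, y⟫_𝕜 := by rw [← inner_conj_symm, conj_re]
  have hxy : re ⟪T y, x⟫_𝕜 = re ⟪T x, y⟫_𝕜 := by rw [hT.inner_left_eq_inner_right, hyx]
  simp only [map_sub, map_smul, inner_sub_right, inner_smul_right, inner_sub_left,
    inner_smul_left, mul_re, mul_im, conj_re, conj_im, ofNat_re, ofNat_im, hxy, hxx, hyx]
  ring

theorem ContinuousLinearMap.IsPositive.neg_re_inner_self_div_four_le {T : E →L[𝕜] E}
    (hT : T.IsPositive) (x y : E) : -(re ⟪T y, y⟫_𝕜 / 4) ≤ re ⟪x - y, T x⟫_𝕜 := by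
  have := hT.re_inner_nonneg_left ((2 : 𝕜) • x - y)
  rw [hT.re_inner_two_smul_sub_apply] at this
  linarith

end Positive

section Evolution

variable {H : Type*} [NormedAddCommGroup H] [InnerProductSpace ℂ H]

theorem HasDerivAt.norm_sq_eq_re_inner {ψ : ℝ → H} {d : H} {t : ℝ} (h : HasDerivAt ψ d t) :
    HasDerivAt (‖ψ ·‖ ^ 2) (2 * (⟪ψ t, d⟫_ℂ).re) t := by
  let := InnerProductSpace.rclikeToReal ℂ H
  exact h.norm_sq

theorem norm_eq_norm_zero_of_re_inner_deriv_eq_zero {ψ ψ' : ℝ → H}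
    (hψ : ∀ t, HasDerivAt ψ (ψ' t) t) (h : ∀ t, (⟪ψ t, ψ' t⟫_ℂ).re = 0) (t : ℝ) :
    ‖ψ t‖ = ‖ψ 0‖ := by
  have hderiv (s : ℝ) : HasDerivAt (‖ψ ·‖ ^ 2) 0 s := by
    simpa [h s] using (hψ s).norm_sq_eq_re_inner
  have hsq := is_const_of_deriv_eq_zero (fun s => (hderiv s).differentiableAt)
    (fun s => (hderiv s).deriv) t 0
  exact (sq_eq_sq₀ (norm_nonneg _) (norm_nonneg _)).mp hsq

theorem antitone_norm_of_re_inner_deriv_nonpos {ψ ψ' : ℝ → H}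
    (hψ : ∀ t, HasDerivAt ψ (ψ' t) t) (h : ∀ t, (⟪ψ t, ψ' t⟫_ℂ).re ≤ 0) :
    Antitone (‖ψ ·‖) := by
  have hsq : Antitone (‖ψ ·‖ ^ 2) := by
    refine antitone_of_deriv_nonpos (fun s => (hψ s).norm_sq_eq_re_inner.differentiableAt)
      fun s => ?_
    rw [(hψ s).norm_sq_eq_re_inner.deriv]
    linarith [h s]
  exact fun s u hsu => (sq_le_sq₀ (norm_nonneg _) (norm_nonneg _)).mp (hsq hsu)

variable {L Γ : H →L[ℂ] H}

theorem re_inner_I_smul_apply_self (hL : (L : H →ₗ[ℂ] H).IsSymmetric) (x : H) :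
    (⟪x, Complex.I • L x⟫_ℂ).re = 0 := by
  simpa [inner_smul_right] using hL.im_inner_self_apply x

theorem re_inner_I_smul_sub_smul_apply_self_nonpos (hL : (L : H →ₗ[ℂ] H).IsSymmetric)
    (hΓ : Γ.IsPositive) {ε : ℝ} (hε : 0 ≤ ε) (x : H) :
    (⟪x, Complex.I • L x - ε • Γ x⟫_ℂ).re ≤ 0 := by
  rw [inner_sub_right, Complex.sub_re, re_inner_I_smul_apply_self hL, ← Complex.coe_smul,
    inner_smul_right, Complex.re_ofReal_mul]
  have hΓx : 0 ≤ (⟪x, Γ x⟫_ℂ).re := hΓ.re_inner_nonneg_right x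
  linarith [mul_nonneg hε hΓx]

theorem re_inner_sub_generator_le (hL : (L : H →ₗ[ℂ] H).IsSymmetric) (hΓ : Γ.IsPositive)
    {ε : ℝ} (hε : 0 ≤ ε) (x y : H) :
    2 * (⟪x - y, (Complex.I • L x - ε • Γ x) - Complex.I • L y⟫_ℂ).re ≤
      ε * (⟪Γ y, y⟫_ℂ).re / 2 := by
  have hgen : (Complex.I • L x - ε • Γ x) - Complex.I • L y
      = Complex.I • L (x - y) - (ε : ℂ) • Γ x := by
    rw [map_sub, smul_sub, Complex.coe_smul]
    abel
  have hquarter : -((⟪Γ y, y⟫_ℂ).re / 4) ≤ (⟪x - y, Γ x⟫_ℂ).re :=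
    hΓ.neg_re_inner_self_div_four_le x y
  rw [hgen, inner_sub_right, Complex.sub_re, re_inner_I_smul_apply_self hL, inner_smul_right,
    Complex.re_ofReal_mul]
  linarith [mul_le_mul_of_nonneg_left hquarter hε]

theorem norm_sub_sq_le_of_re_inner_apply_le (hL : (L : H →ₗ[ℂ] H).IsSymmetric)
    (hΓ : Γ.IsPositive) {ε : ℝ} (hε : 0 ≤ ε) {φe φ0 : ℝ → H}
    (hφe : ∀ t, HasDerivAt φe (Complex.I • L (φe t) - ε • Γ (φe t)) t)
    (hφ0 : ∀ t, HasDerivAt φ0 (Complex.I • L (φ0 t)) t) (hinit : φe 0 = φ0 0) {K : ℝ}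
    (hK : ∀ s, 0 ≤ s → (⟪Γ (φ0 s), φ0 s⟫_ℂ).re ≤ K) {t : ℝ} (ht : 0 ≤ t) :
    ‖φe t - φ0 t‖ ^ 2 ≤ ε * K / 2 * t := by
  have hf (s : ℝ) : HasDerivAt (fun u => ‖φe u - φ0 u‖ ^ 2) _ s :=
    ((hφe s).sub (hφ0 s)).norm_sq_eq_re_inner
  have hdiff : Differentiable ℝ (fun u => ‖φe u - φ0 u‖ ^ 2) := fun s => (hf s).differentiableAt
  have hderiv_le :
      ∀ s ∈ interior (Set.Ici (0 : ℝ)), deriv (fun u => ‖φe u - φ0 u‖ ^ 2) s ≤ ε * K / 2 := by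
    intro s hs
    rw [interior_Ici] at hs
    rw [(hf s).deriv]
    calc _ ≤ ε * (⟪Γ (φ0 s), φ0 s⟫_ℂ).re / 2 := re_inner_sub_generator_le hL hΓ hε _ _
      _ ≤ ε * K / 2 := by gcongr; exact hK s (le_of_lt hs)
  have := (convex_Ici 0).image_sub_le_mul_sub_of_deriv_le hdiff.continuous.continuousOn
    hdiff.differentiableOn hderiv_le 0 Set.self_mem_Ici t ht ht
  simpa [hinit] using this

end Evolution

theorem min_sq_div_two_four_le {s : ℝ} (hs : 0 ≤ s) : min (s ^ 2 / 2) 4 ≤ 4 * s := by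
  rcases le_total s 8 with hs8 | hs8
  · exact (min_le_left _ _).trans (by nlinarith)
  · exact (min_le_right _ _).trans (by linarith)

/-- Lemma 2.3a: closeness of the dissipative evolution to the free evolution when the
free evolution stays bounded in the `H¹(Γ)` norm `‖ψ‖₁ = √⟨Γψ, ψ⟩`. -/
theorem stmt_0
    {H : Type*} [NormedAddCommGroup H] [InnerProductSpace ℂ H] [CompleteSpace H]
    (Γ L : H →L[ℂ] H)
    (hΓsa : IsSelfAdjoint Γ) (hLsa : IsSelfAdjoint L)
    (hΓpos : ∀ x : H, 0 ≤ (inner ℂ (Γ x) x : ℂ).re)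
    (ε : ℝ) (hε : 0 < ε)
    (φe φ0 : ℝ → H)
    (hφe : ∀ t : ℝ, HasDerivAt φe (Complex.I • L (φe t) - ε • Γ (φe t)) t)
    (hφ0 : ∀ t : ℝ, HasDerivAt φ0 (Complex.I • L (φ0 t)) t)
    (hinit : φe 0 = φ0 0)
    (b : ℝ) (hb : 0 ≤ b)
    (hH1 : ∀ t : ℝ, 0 ≤ t →
      Real.sqrt ((inner ℂ (Γ (φ0 t)) (φ0 t) : ℂ).re) ≤ b * ‖φ0 0‖) :
    ∀ t : ℝ, 0 ≤ t →
      ‖φe t - φ0 t‖ ^ 2 ≤ 4 * b * Real.sqrt (ε * t) * ‖φ0 0‖ ^ 2 := by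
  intro t ht
  have hL := hLsa.isSymmetric
  have hΓ : Γ.IsPositive := ⟨hΓsa.isSymmetric, hΓpos⟩
  have hφ0_norm := norm_eq_norm_zero_of_re_inner_deriv_eq_zero hφ0
    fun s => re_inner_I_smul_apply_self hL (φ0 s)
  have hφe_anti := antitone_norm_of_re_inner_deriv_nonpos hφe
    fun s => re_inner_I_smul_sub_smul_apply_self_nonpos hL hΓ hε.le (φe s)
  have hclose : ‖φe t - φ0 t‖ ^ 2 ≤ ε * (b * ‖φ0 0‖) ^ 2 / 2 * t :=
    norm_sub_sq_le_of_re_inner_apply_le hL hΓ hε.le hφe hφ0 hinit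
      (fun s hs => (Real.sqrt_le_iff.mp (hH1 s hs)).2) ht
  have hfar : ‖φe t - φ0 t‖ ≤ 2 * ‖φ0 0‖ := calc
    ‖φe t - φ0 t‖ ≤ ‖φe t‖ + ‖φ0 t‖ := norm_sub_le _ _
    _ ≤ ‖φe 0‖ + ‖φ0 0‖ := add_le_add (hφe_anti ht) (hφ0_norm t).le
    _ = 2 * ‖φ0 0‖ := by rw [hinit]; ring
  set r := b * Real.sqrt (ε * t)
  have hr_sq : r ^ 2 = ε * b ^ 2 * t := by
    rw [mul_pow, Real.sq_sqrt (by positivity)]; ring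
  calc ‖φe t - φ0 t‖ ^ 2 ≤ min (r ^ 2 / 2) 4 * ‖φ0 0‖ ^ 2 := by
        rw [min_mul_of_nonneg _ _ (sq_nonneg _)]
        refine le_min (by rw [hr_sq]; linarith) ?_
        nlinarith [norm_nonneg (φe t - φ0 t)]
    _ ≤ 4 * r * ‖φ0 0‖ ^ 2 := by
      gcongr; exact min_sq_div_two_four_le (mul_nonneg hb (Real.sqrt_nonneg _))
    _ = 4 * b * Real.sqrt (ε * t) * ‖φ0 0‖ ^ 2 := by ring
end

section
/- Let L be a self-adjoint operator on a separable Hilbert space H and let K ⊂ H be compact. Then the set K' = ⋃_{t ∈ ℝ} e^{iLt} P_p K is precompact in H, where P_p is the spectral projection onto the pure point subspace of L. -/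
/-- Precompactness of `⋃ₜ e^{iLt} P_p K` for compact `K`, where `P_p` is the orthogonal
projection onto the closure of the span of all eigenvectors of the self-adjoint operator `L`,
and `U t = e^{iLt}` is the unitary group generated by `L`. -/
theorem stmt_2
    {H : Type*} [NormedAddCommGroup H] [InnerProductSpace ℂ H] [CompleteSpace H]
    [TopologicalSpace.SeparableSpace H]
    (L : H →L[ℂ] H) (hL : IsSelfAdjoint L)
    (U : ℝ → H →L[ℂ] H)
    (hU0 : U 0 = 1)
    (hUgrp : ∀ s t : ℝ, U (s + t) = (U s).comp (U t))
    (hUiso : ∀ (t : ℝ) (x : H), ‖U t x‖ = ‖x‖)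
    (hUeig : ∀ (t : ℝ) (μ : ℝ) (x : H), L x = (μ : ℂ) • x →
      U t x = Complex.exp (Complex.I * μ * t) • x)
    (P : H →L[ℂ] H) (hPsa : IsSelfAdjoint P) (hPidem : P.comp P = P)
    (hPrange : Set.range P =
      closure ((Submodule.span ℂ {x : H | ∃ μ : ℝ, L x = (μ : ℂ) • x} : Submodule ℂ H) : Set H))
    (K : Set H) (hK : IsCompact K) :
    IsCompact (closure (⋃ t : ℝ, U t '' (P '' K))) := by
  set E : Set H := {x : H | ∃ μ : ℝ, L x = (μ : ℂ) • x} with hE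
  have htb : TotallyBounded (⋃ t : ℝ, U t '' (P '' K)) := by
    rw [Metric.totallyBounded_iff]
    intro ε hε
    -- step 1: per-point nets
    have claim : ∀ x ∈ P '' K, ∃ N : Set H, N.Finite ∧
        ∀ t : ℝ, ∃ y ∈ N, dist (U t x) y < 3 * ε / 4 := by
      intro x hx
      have hxr : x ∈ Set.range P := ⟨hx.choose, hx.choose_spec.2⟩
      rw [hPrange] at hxr
      obtain ⟨v, hvmem, hvd⟩ := Metric.mem_closure_iff.1 hxr (ε / 4) (by linarith)
      obtain ⟨F, hFE, hvF⟩ := Submodule.mem_span_finite_of_mem_span hvmem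
      set W : Submodule ℂ H := Submodule.span ℂ (F : Set H) with hW
      haveI : FiniteDimensional ℂ W := FiniteDimensional.span_of_finite ℂ F.finite_toSet
      have hUW : ∀ t : ℝ, ∀ w ∈ W, U t w ∈ W := by
        intro t w hw
        induction hw using Submodule.span_induction with
        | mem z hz =>
          obtain ⟨μ, hμ⟩ := hFE hz
          rw [hUeig t μ z hμ]
          exact W.smul_mem _ (Submodule.subset_span hz)
        | zero => simpa using W.zero_mem
        | add a b _ _ ha hb => rw [map_add]; exact W.add_mem ha hb
        | smul c a _ ha => rw [map_smul]; exact W.smul_mem c ha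
      -- the orbit of v lies in the compact set C
      set C : Set H := Subtype.val '' (Metric.closedBall (0 : W) ‖v‖) with hC
      have hCcomp : IsCompact C :=
        (isCompact_closedBall (0 : W) ‖v‖).image continuous_subtype_val
      have horbit : ∀ t : ℝ, U t v ∈ C := by
        intro t
        refine ⟨⟨U t v, hUW t v hvF⟩, ?_, rfl⟩
        simp [Metric.mem_closedBall, dist_eq_norm, Submodule.norm_coe, hUiso t v]
      obtain ⟨N, hNfin, hNsub⟩ := Metric.totallyBounded_iff.1 hCcomp.totallyBounded
        (ε / 2) (by linarith)
      refine ⟨N, hNfin, fun t => ?_⟩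
      obtain ⟨y, hyN, hy⟩ := Set.mem_iUnion₂.1 (hNsub (horbit t))
      refine ⟨y, hyN, ?_⟩
      have h1 : dist (U t x) (U t v) < ε / 4 := by
        rw [dist_eq_norm, ← map_sub, hUiso t (x - v), ← dist_eq_norm]
        exact hvd
      calc dist (U t x) y ≤ dist (U t x) (U t v) + dist (U t v) y := dist_triangle _ _ _
        _ < ε / 4 + ε / 2 := by exact add_lt_add h1 hy
        _ = 3 * ε / 4 := by ring
    -- step 2: finite net for P '' K with centers in P '' K
    have hPK : IsCompact (P '' K) := hK.image P.continuous
    obtain ⟨T, hTsub, hTfin, hTcover⟩ :=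
      totallyBounded_iff_subset.1 hPK.totallyBounded _
        (Metric.dist_mem_uniformity (show (0:ℝ) < ε / 4 by linarith))
    choose! N hNfin hNnet using claim
    refine ⟨⋃ x ∈ T, N x, hTfin.biUnion (fun x hx => hNfin x (hTsub hx)), ?_⟩
    rintro z hz
    obtain ⟨t, hz⟩ := Set.mem_iUnion.1 hz
    obtain ⟨w, hw, rfl⟩ := hz
    obtain ⟨x, hxT, hwx⟩ := Set.mem_iUnion₂.1 (hTcover hw)
    obtain ⟨y, hyN, hy⟩ := hNnet x (hTsub hxT) t
    refine Set.mem_iUnion₂.2 ⟨y, Set.mem_iUnion₂.2 ⟨x, hxT, hyN⟩, ?_⟩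
    have h1 : dist (U t w) (U t x) < ε / 4 := by
      rw [dist_eq_norm, ← map_sub, hUiso t (w - x), ← dist_eq_norm]
      exact hwx
    calc dist (U t w) y ≤ dist (U t w) (U t x) + dist (U t x) y := dist_triangle _ _ _
      _ < ε / 4 + 3 * ε / 4 := add_lt_add h1 hy
      _ = ε := by ring
  exact TotallyBounded.isCompact_of_isClosed htb.closure isClosed_closure
end

section
/- Let u be a 1-periodic incompressible Lipschitz vector field on ℝⁿ and let M = k𝕋 × 𝕋^{n−1} for an integer k ≥ 2. Suppose ψ ∈ H¹(M) satisfies u·∇ψ = iλψ with λ ≠ 0. Then the flow u on the unit torus 𝕋ⁿ admits an H¹(𝕋ⁿ) eigenfunction with some non-zero eigenvalue (in fact, with eigenvalue jλ for some integer 1 ≤ j ≤ k). -/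
/-!
With `e` the first unit vector and `ζ` a primitive `k`-th root of unity, the twisted sums
`ψ_j = ∑_{m<k} ζ^{jm} ψ(· + m e)` are again eigenfunctions with eigenvalue `iλ`, are `1`-periodic
in the other directions, satisfy `ζ^j ψ_j(· + e) = ψ_j`, and add up to `kψ`; so one of them is
non-trivial, and by the periodicity of its modulus it is already non-trivial on the unit cube.
The phase `ζ^j` is removed by composing with `G(z) = z^k / (1 + |z|²)^(k-1)`, which satisfies
`G(cz) = c^k G(z)` for `|c| = 1` and hence turns the eigenvalue `iλ` into `ikλ`. Unlike the
paper's `ψ_j^k / |ψ_j|^(k-1)`, `G` is smooth with bounded derivative, so `G ∘ ψ_j` stays in `H¹`.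
-/

open MeasureTheory Finset Function Complex
open scoped NNReal Real RealInnerProductSpace

noncomputable section

-- The map `G` for `k = m + 1`.
def regPow (m : ℕ) (z : ℂ) : ℂ := (1 + ‖z‖ ^ 2) ^ (-(m : ℤ)) • z ^ (m + 1)

namespace regPow

theorem hasFDerivAt (m : ℕ) (z : ℂ) : HasFDerivAt (regPow m)
    ((1 + ‖z‖ ^ 2) ^ (-(m : ℤ)) • (((m + 1 : ℕ) • z ^ m) • ContinuousLinearMap.id ℝ ℂ) +
      ((((-m : ℤ) : ℝ) * (1 + ‖z‖ ^ 2) ^ (-(m : ℤ) - 1)) • (2 • innerSL ℝ z)).smulRight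
        (z ^ (m + 1))) z := by
  have hρ : HasFDerivAt (fun w : ℂ => 1 + ‖w‖ ^ 2) (2 • innerSL ℝ z) z :=
    (hasFDerivAt_id z).norm_sq.const_add 1
  have hr := (hasDerivAt_zpow (-(m : ℤ)) (1 + ‖z‖ ^ 2) (Or.inl (by positivity))).comp_hasFDerivAt
    z hρ
  exact hr.smul (hasFDerivAt_pow (𝕜 := ℝ) (m + 1) (x := z))

theorem differentiable (m : ℕ) : Differentiable ℝ (regPow m) :=
  fun z => (hasFDerivAt m z).differentiableAt

theorem fderiv_apply (m : ℕ) (z h : ℂ) : fderiv ℝ (regPow m) z h =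
    ((1 + ‖z‖ ^ 2)⁻¹ ^ m * (m + 1) : ℝ) • (z ^ m * h) -
      (2 * m * (1 + ‖z‖ ^ 2)⁻¹ ^ (m + 1) * ⟪z, h⟫ : ℝ) • z ^ (m + 1) := by
  have hzpow (j : ℕ) : (1 + ‖z‖ ^ 2) ^ (-(j : ℤ)) = (1 + ‖z‖ ^ 2)⁻¹ ^ j := by
    rw [zpow_neg, zpow_natCast, inv_pow]
  rw [(hasFDerivAt m z).fderiv, show -(m : ℤ) - 1 = -((m + 1 : ℕ) : ℤ) by push_cast; ring,
    hzpow, hzpow]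
  simp only [add_apply, smul_apply, ContinuousLinearMap.smulRight_apply,
    ContinuousLinearMap.id_apply, innerSL_apply_apply]
  push_cast
  simp only [Complex.real_smul, nsmul_eq_mul, smul_eq_mul]
  push_cast
  ring

theorem norm_fderiv_le (m : ℕ) (z : ℂ) : ‖fderiv ℝ (regPow m) z‖ ≤ 3 * m + 1 := by
  set ρ := 1 + ‖z‖ ^ 2
  have hρ : 0 < ρ := by positivity
  have hz : ‖z‖ * ρ⁻¹ ≤ 1 := by
    rw [← div_eq_mul_inv, div_le_one hρ]; nlinarith [sq_nonneg (‖z‖ - 1)]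
  have hz2 : ‖z‖ ^ 2 * ρ⁻¹ ≤ 1 := by
    rw [← div_eq_mul_inv, div_le_one hρ]; linarith
  refine ContinuousLinearMap.opNorm_le_bound _ (by positivity) fun h => ?_
  rw [fderiv_apply]
  calc _ ≤ ρ⁻¹ ^ m * (m + 1) * (‖z‖ ^ m * ‖h‖) +
        2 * m * ρ⁻¹ ^ (m + 1) * (‖z‖ * ‖h‖) * ‖z‖ ^ (m + 1) := by
        refine (norm_sub_le _ _).trans (add_le_add ?_ ?_)
        · rw [norm_smul, Real.norm_of_nonneg (by positivity), norm_mul, norm_pow]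
        · rw [norm_smul, norm_pow, Real.norm_eq_abs, abs_mul, abs_of_nonneg (by positivity)]
          gcongr
          exact abs_real_inner_le_norm z h
    _ = ((m + 1) * (‖z‖ * ρ⁻¹) ^ m + 2 * m * ((‖z‖ * ρ⁻¹) ^ m * (‖z‖ ^ 2 * ρ⁻¹))) * ‖h‖ := by
        ring
    _ ≤ ((m + 1) * 1 + 2 * m * (1 * 1)) * ‖h‖ := by
        gcongr
        · exact pow_le_one₀ (by positivity) hz
        · exact pow_le_one₀ (by positivity) hz
    _ = (3 * m + 1) * ‖h‖ := by ring

theorem fderiv_apply_I_mul_smul_self (m : ℕ) (z : ℂ) (t : ℝ) :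
    fderiv ℝ (regPow m) z ((I * t) • z) = (I * (((m + 1 : ℕ) : ℝ) * t)) • regPow m z := by
  have horth : ⟪z, (I * t) • z⟫ = 0 := by
    simp [Complex.inner]; ring
  rw [fderiv_apply, horth, regPow, zpow_neg, zpow_natCast, inv_pow]
  simp only [mul_zero, zero_smul, sub_zero, Complex.real_smul, smul_eq_mul]
  push_cast
  ring

theorem norm_le (m : ℕ) (z : ℂ) : ‖regPow m z‖ ≤ ‖z‖ := by
  have hρ : 0 < 1 + ‖z‖ ^ 2 := by positivity
  have hz : ‖z‖ ≤ 1 + ‖z‖ ^ 2 := by nlinarith [sq_nonneg (‖z‖ - 1)]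
  rw [regPow, norm_smul, zpow_neg, zpow_natCast, norm_inv, norm_pow, norm_pow,
    Real.norm_of_nonneg hρ.le, inv_mul_le_iff₀ (by positivity), pow_succ]
  exact mul_le_mul_of_nonneg_right (pow_le_pow_left₀ (norm_nonneg z) hz m) (norm_nonneg z)

theorem eq_zero_iff {m : ℕ} {z : ℂ} : regPow m z = 0 ↔ z = 0 := by
  rw [regPow, smul_eq_zero, or_iff_right (zpow_ne_zero _ (by positivity)),
    pow_eq_zero_iff m.succ_ne_zero]

theorem mul_of_norm_eq_one (m : ℕ) {c : ℂ} (hc : ‖c‖ = 1) (z : ℂ) :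
    regPow m (c * z) = c ^ (m + 1) * regPow m z := by
  rw [regPow, regPow, norm_mul, hc, one_mul, mul_pow, mul_smul_comm]

section comp

variable {E : Type*} [NormedAddCommGroup E] [NormedSpace ℝ E] (m : ℕ) {f : E → ℂ} {x : E}

theorem fderiv_comp_apply_of_eigen (hf : DifferentiableAt ℝ f x) {v : E} {t : ℝ}
    (h : fderiv ℝ f x v = (I * t) • f x) :
    fderiv ℝ (fun y => regPow m (f y)) x v = (I * (((m + 1 : ℕ) : ℝ) * t)) • regPow m (f x) := by
  rw [show (fun y => regPow m (f y)) = regPow m ∘ f from rfl,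
    fderiv_comp x (differentiable m _) hf, ContinuousLinearMap.comp_apply, h,
    fderiv_apply_I_mul_smul_self]

theorem norm_fderiv_comp_le (hf : DifferentiableAt ℝ f x) :
    ‖fderiv ℝ (fun y => regPow m (f y)) x‖ ≤ (3 * m + 1) * ‖fderiv ℝ f x‖ := by
  rw [show (fun y => regPow m (f y)) = regPow m ∘ f from rfl, fderiv_comp x (differentiable m _) hf]
  exact (ContinuousLinearMap.opNorm_comp_le _ _).trans
    (mul_le_mul_of_nonneg_right (norm_fderiv_le m _) (norm_nonneg _))

end comp

end regPow

theorem MeasureTheory.MemLp.regPow {α : Type*} [MeasurableSpace α] {μ : Measure α} {p : ENNReal}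
    {f : α → ℂ} (hf : MemLp f p μ) (m : ℕ) : MemLp (fun x => regPow m (f x)) p μ :=
  hf.of_le ((regPow.differentiable m).continuous.comp_aestronglyMeasurable hf.1)
    (ae_of_all _ fun x => regPow.norm_le m (f x))

theorem IsPrimitiveRoot.geom_sum_pow_eq_zero {R : Type*} [CommRing R] [IsDomain R] {ζ : R}
    {k m : ℕ} (hζ : IsPrimitiveRoot ζ k) (hm0 : m ≠ 0) (hmk : m < k) :
    ∑ j ∈ range k, (ζ ^ m) ^ j = 0 := by
  have hsub : ζ ^ m - 1 ≠ 0 := sub_ne_zero.mpr (hζ.pow_ne_one_of_pos_of_lt hm0 hmk)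
  have h := geom_sum_mul (ζ ^ m) k
  rw [pow_right_comm, hζ.pow_eq_one, one_pow, sub_self] at h
  exact (mul_eq_zero.mp h).resolve_right hsub

section twistedSum

variable {E : Type*} [AddCommGroup E] (ψ : E → ℂ) (e : E) (k : ℕ)

def twistedSum (ω : ℂ) (x : E) : ℂ :=
  ∑ m ∈ range k, ω ^ m * ψ (x + m • e)

variable {ψ e k}

theorem twistedSum_add_self {ω : ℂ} (hψ : Periodic ψ (k • e)) (hω : ω ^ k = 1) (x : E) :
    ω * twistedSum ψ e k ω (x + e) = twistedSum ψ e k ω x := by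
  set f : ℕ → ℂ := fun m => ω ^ m * ψ (x + m • e)
  have hfk : f k = f 0 := by simp [f, hω, hψ x]
  have hshift : ∑ m ∈ range k, f (m + 1) = ∑ m ∈ range k, f m :=
    add_right_cancel (b := f 0) <| by rw [← sum_range_succ', sum_range_succ, hfk]
  calc ω * twistedSum ψ e k ω (x + e) = ∑ m ∈ range k, f (m + 1) := by
        rw [twistedSum, mul_sum]
        refine sum_congr rfl fun m _ => ?_
        simp only [f, pow_succ', succ_nsmul', add_assoc, mul_assoc]
    _ = twistedSum ψ e k ω x := hshift

theorem Function.Periodic.twistedSum {v : E} (hψ : Periodic ψ v) (ω : ℂ) :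
    Periodic (twistedSum ψ e k ω) v := fun x => by
  simp only [_root_.twistedSum, add_right_comm x v, hψ _]

theorem periodic_regPow_twistedSum {m : ℕ} {ω : ℂ} (hψ : Periodic ψ ((m + 1) • e))
    (hω : ω ^ (m + 1) = 1) : Periodic (fun x => regPow m (twistedSum ψ e (m + 1) ω x)) e :=
  fun x => by
    dsimp only
    rw [← twistedSum_add_self hψ hω x,
      regPow.mul_of_norm_eq_one m (norm_eq_one_of_pow_eq_one hω m.succ_ne_zero), hω, one_mul]

theorem sum_twistedSum_pow {ζ : ℂ} (hζ : IsPrimitiveRoot ζ k) (x : E) :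
    ∑ j ∈ range k, twistedSum ψ e k (ζ ^ j) x = k * ψ x := by
  simp only [twistedSum]
  rw [sum_comm, sum_eq_single 0]
  · simp
  · intro m hm hm0
    rw [← sum_mul, sum_congr rfl fun j _ => pow_right_comm ζ j m,
      hζ.geom_sum_pow_eq_zero hm0 (mem_range.mp hm), zero_mul]
  · intro h0
    simp [show k = 0 by simpa using h0]

theorem memLp_twistedSum [MeasurableSpace E] {μ : Measure E} {p : ENNReal}
    (h : ∀ m < k, MemLp (fun x => ψ (x + m • e)) p μ) (ω : ℂ) :
    MemLp (twistedSum ψ e k ω) p μ := by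
  have hsum := memLp_finsetSum' (range k) fun m hm => (h m (mem_range.mp hm)).const_mul (ω ^ m)
  convert hsum using 1
  ext x
  simp [twistedSum]

end twistedSum

section fderiv

variable {E : Type*} [NormedAddCommGroup E] [NormedSpace ℝ E] {ψ : E → ℂ} {e x : E} {k : ℕ}

theorem hasFDerivAt_twistedSum (hψ : ∀ m < k, DifferentiableAt ℝ ψ (x + m • e)) (ω : ℂ) :
    HasFDerivAt (twistedSum ψ e k ω) (∑ m ∈ range k, ω ^ m • fderiv ℝ ψ (x + m • e)) x := by
  unfold twistedSum
  refine HasFDerivAt.fun_sum fun m hm => ?_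
  have h := (hψ m (mem_range.mp hm)).hasFDerivAt.comp x ((hasFDerivAt_id x).add_const (m • e))
  simpa using h.const_mul (ω ^ m)

theorem fderiv_twistedSum_apply_of_eigen (hψ : ∀ m < k, DifferentiableAt ℝ ψ (x + m • e))
    {v : E} {c : ℂ} (heig : ∀ m < k, fderiv ℝ ψ (x + m • e) v = c • ψ (x + m • e)) (ω : ℂ) :
    fderiv ℝ (twistedSum ψ e k ω) x v = c • twistedSum ψ e k ω x := by
  rw [(hasFDerivAt_twistedSum hψ ω).fderiv, _root_.sum_apply, twistedSum, smul_sum]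
  refine sum_congr rfl fun m hm => ?_
  rw [smul_apply, heig m (mem_range.mp hm), smul_eq_mul, smul_eq_mul, smul_eq_mul, mul_left_comm]

theorem fderiv_regPow_twistedSum_apply_of_eigen (hψ : ∀ m < k, DifferentiableAt ℝ ψ (x + m • e))
    {v : E} {t : ℝ} (heig : ∀ m < k, fderiv ℝ ψ (x + m • e) v = (I * t) • ψ (x + m • e))
    (ω : ℂ) (l : ℕ) :
    fderiv ℝ (fun y => regPow l (twistedSum ψ e k ω y)) x v =
      (I * (((l + 1 : ℕ) : ℝ) * t)) • regPow l (twistedSum ψ e k ω x) :=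
  regPow.fderiv_comp_apply_of_eigen l (hasFDerivAt_twistedSum hψ ω).differentiableAt
    (fderiv_twistedSum_apply_of_eigen hψ heig ω)

theorem norm_fderiv_regPow_twistedSum_le (hψ : ∀ m < k, DifferentiableAt ℝ ψ (x + m • e))
    {ω : ℂ} (hω : ‖ω‖ = 1) (l : ℕ) :
    ‖fderiv ℝ (fun y => regPow l (twistedSum ψ e k ω y)) x‖ ≤
      (3 * l + 1) * ∑ m ∈ range k, ‖fderiv ℝ ψ (x + m • e)‖ := by
  refine (regPow.norm_fderiv_comp_le l (hasFDerivAt_twistedSum hψ ω).differentiableAt).trans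
    (mul_le_mul_of_nonneg_left ?_ (by positivity))
  rw [(hasFDerivAt_twistedSum hψ ω).fderiv]
  refine (norm_sum_le _ _).trans_eq (sum_congr rfl fun m _ => ?_)
  rw [norm_smul, norm_pow, hω, one_pow, one_mul]

theorem memLp_norm_fderiv_regPow_twistedSum [MeasurableSpace E] [OpensMeasurableSpace E]
    {μ : Measure E} {p : ENNReal} (hψ : ∀ᵐ x ∂μ, ∀ m < k, DifferentiableAt ℝ ψ (x + m • e))
    (hψ' : ∀ m < k, MemLp (fun x => ‖fderiv ℝ ψ (x + m • e)‖) p μ) {ω : ℂ} (hω : ‖ω‖ = 1)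
    (l : ℕ) : MemLp (fun x => ‖fderiv ℝ (fun y => regPow l (twistedSum ψ e k ω y)) x‖) p μ := by
  have hbound := (memLp_finsetSum' (range k) fun m hm => hψ' m (mem_range.mp hm)).const_mul
    (3 * l + 1 : ℝ)
  refine hbound.of_le (measurable_fderiv ℝ _).norm.aestronglyMeasurable (hψ.mono fun x hx => ?_)
  rw [norm_norm, Finset.sum_apply, Real.norm_of_nonneg (by positivity)]
  exact norm_fderiv_regPow_twistedSum_le hx hω l

end fderiv

theorem ae_forall_add_nsmul {E : Type*} [AddMonoid E] [MeasurableSpace E] [MeasurableAdd E]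
    {μ : Measure E} [μ.IsAddRightInvariant] {p : E → Prop} (h : ∀ᵐ x ∂μ, p x) (e : E) :
    ∀ᵐ x ∂μ, ∀ m : ℕ, p (x + m • e) :=
  ae_all_iff.mpr fun m => (measurePreserving_add_right μ (m • e)).quasiMeasurePreserving.ae h

theorem MeasureTheory.MemLp.comp_add_right_restrict {E F : Type*} [AddGroup E] [MeasurableSpace E]
    [MeasurableAdd E] [NormedAddCommGroup F] {μ : Measure E} [μ.IsAddRightInvariant]
    {f : E → F} {p : ENNReal} {s t : Set E} (hf : MemLp f p (μ.restrict t)) (ht : MeasurableSet t)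
    {v : E} (hst : ∀ x ∈ s, x + v ∈ t) :
    MemLp (fun x => f (x + v)) p (μ.restrict s) :=
  (hf.comp_measurePreserving ((measurePreserving_add_right μ v).restrict_preimage ht)).mono_measure
    (Measure.restrict_mono hst le_rfl)

section box

variable {ι : Type*} [DecidableEq ι]

theorem add_nsmul_single_mem_pi_Ico {i₀ : ι} {x : ι → ℝ}
    (hx : x ∈ Set.univ.pi fun _ => Set.Ico (0 : ℝ) 1) {m k : ℕ} (hm : m < k) :
    x + m • Pi.single i₀ 1 ∈
      Set.univ.pi fun j => Set.Ico (0 : ℝ) (if j = i₀ then (k : ℝ) else 1) := by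
  have hmk : (m : ℝ) + 1 ≤ k := by exact_mod_cast hm
  intro j _
  have hxj := hx j (Set.mem_univ j)
  simp only [Set.mem_Ico] at hxj ⊢
  by_cases hj : j = i₀
  · subst hj
    simp only [Pi.add_apply, Pi.smul_apply, Pi.single_eq_same, nsmul_one, if_pos]
    constructor <;> linarith [(m.cast_nonneg : (0 : ℝ) ≤ m)]
  · simpa [hj] using hxj

variable [Fintype ι]

theorem MeasureTheory.MemLp.comp_add_nsmul_single {F : Type*} [NormedAddCommGroup F]
    {f : (ι → ℝ) → F} {p : ENNReal} {i₀ : ι}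
    {k : ℕ} (hf : MemLp f p (volume.restrict
      (Set.univ.pi fun j => Set.Ico (0 : ℝ) (if j = i₀ then (k : ℝ) else 1))))
    {m : ℕ} (hm : m < k) :
    MemLp (fun x => f (x + m • Pi.single i₀ 1)) p
      (volume.restrict (Set.univ.pi fun _ => Set.Ico (0 : ℝ) 1)) :=
  hf.comp_add_right_restrict (MeasurableSet.univ_pi fun _ => measurableSet_Ico)
    fun _ hx => add_nsmul_single_mem_pi_Ico hx hm

theorem ae_of_ae_restrict_unitCube {p : (ι → ℝ) → Prop} (hp : ∀ x i, p (x + Pi.single i 1) ↔ p x)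
    (h : ∀ᵐ x ∂volume.restrict (Set.univ.pi fun _ => Set.Ico (0 : ℝ) 1), p x) : ∀ᵐ x, p x := by
  let H : AddSubgroup (ι → ℝ) :=
    { carrier := {v | ∀ x, p (x + v) ↔ p x}
      add_mem' := fun {v w} hv hw x => by rw [← add_assoc, hw, hv]
      zero_mem' := fun x => by rw [add_zero]
      neg_mem' := fun {v} hv x => by rw [← hv, neg_add_cancel_right] }
  have hint (a : ι → ℤ) : (fun i => (a i : ℝ)) ∈ H := by
    rw [← univ_sum_single fun i => (a i : ℝ)]
    refine H.sum_mem fun i _ => ?_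
    have hsingle : (Pi.single i (a i : ℝ) : ι → ℝ) = a i • (Pi.single i 1 : ι → ℝ) := by
      ext j; by_cases hj : j = i <;> simp [hj]
    rw [hsingle]
    exact H.zsmul_mem (hp · i) _
  rw [ae_restrict_iff' (MeasurableSet.univ_pi fun _ => measurableSet_Ico), ae_iff] at h
  rw [ae_iff]
  -- every `x` is an integer translate of a point of the unit cube
  refine measure_mono_null (fun x hx => Set.mem_iUnion.mpr ⟨fun i => -⌊x i⌋, ?_⟩)
    (measure_iUnion_null fun a => (measurePreserving_add_right volume fun i => (a i : ℝ))
      |>.quasiMeasurePreserving.preimage_null h)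
  refine fun hcube => hx ((hint _ x).mp (hcube fun i _ => ?_))
  simp only [Pi.add_apply, Int.cast_neg, Set.mem_Ico]
  constructor <;> linarith [Int.floor_le (x i), Int.lt_floor_add_one (x i)]

theorem exists_twistedSum_not_ae_eq_zero {i₀ : ι} {k : ℕ} (hk : k ≠ 0) {ζ : ℂ}
    (hζ : IsPrimitiveRoot ζ k) {ψ : (ι → ℝ) → ℂ} (hψk : Periodic ψ (k • Pi.single i₀ 1))
    (hψ : ∀ i ≠ i₀, Periodic ψ (Pi.single i 1)) (hψ0 : ¬ ∀ᵐ x, ψ x = 0) :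
    ∃ j, ¬ ∀ᵐ x ∂volume.restrict (Set.univ.pi fun _ => Set.Ico (0 : ℝ) 1),
      twistedSum ψ (Pi.single i₀ 1) k (ζ ^ j) x = 0 := by
  by_contra! hcube
  have hzero (j : ℕ) : ∀ᵐ x, twistedSum ψ (Pi.single i₀ 1) k (ζ ^ j) x = 0 := by
    refine ae_of_ae_restrict_unitCube (fun x i => ?_) (hcube j)
    by_cases hi : i = i₀
    · have hroot : (ζ ^ j) ^ k = 1 := by rw [pow_right_comm, hζ.pow_eq_one, one_pow]
      rw [hi, ← twistedSum_add_self hψk hroot x, mul_eq_zero,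
        or_iff_right (pow_ne_zero _ (hζ.ne_zero hk))]
    · rw [(hψ i hi).twistedSum]
  apply hψ0
  filter_upwards [ae_all_iff.mpr hzero] with x hx
  have hsum := sum_twistedSum_pow (e := Pi.single i₀ 1) hζ (ψ := ψ) x
  simp only [hx, sum_const_zero] at hsum
  exact (mul_eq_zero.mp hsum.symm).resolve_left (Nat.cast_ne_zero.mpr hk)

end box

end

theorem stmt_5_general (n : ℕ) (hn : 0 < n)
    (u : (Fin n → ℝ) → (Fin n → ℝ))
    (huper : ∀ (x : Fin n → ℝ) (j : Fin n), u (x + Pi.single j 1) = u x)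
    (k : ℕ) (hk : 2 ≤ k)
    (F : Set (Fin n → ℝ))
    (hF : F = Set.univ.pi fun j => Set.Ico (0 : ℝ) (if j = (⟨0, hn⟩ : Fin n) then (k : ℝ) else 1))
    (C : Set (Fin n → ℝ)) (hC : C = Set.univ.pi fun _ => Set.Ico (0 : ℝ) 1)
    (ψ : (Fin n → ℝ) → ℂ)
    (hψper0 : ∀ x : Fin n → ℝ, ψ (x + Pi.single (⟨0, hn⟩ : Fin n) (k : ℝ)) = ψ x)
    (hψper : ∀ (x : Fin n → ℝ) (j : Fin n), j ≠ (⟨0, hn⟩ : Fin n) →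
      ψ (x + Pi.single j 1) = ψ x)
    (hψdiff : ∀ᵐ x : Fin n → ℝ, DifferentiableAt ℝ ψ x)
    (hψL2 : MemLp ψ 2 (volume.restrict F))
    (hψH1 : MemLp (fun x => ‖fderiv ℝ ψ x‖) 2 (volume.restrict F))
    (hψ0 : ¬ (∀ᵐ x ∂(volume.restrict F), ψ x = 0))
    (lam : ℝ)
    (heig : ∀ᵐ x : Fin n → ℝ, fderiv ℝ ψ x (u x) = (Complex.I * lam) • ψ x) :
    ∃ (φ : (Fin n → ℝ) → ℂ) (j : ℕ), 1 ≤ j ∧ j ≤ k ∧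
      (∀ (x : Fin n → ℝ) (i : Fin n), φ (x + Pi.single i 1) = φ x) ∧
      (∀ᵐ x : Fin n → ℝ, DifferentiableAt ℝ φ x) ∧
      MemLp φ 2 (volume.restrict C) ∧
      MemLp (fun x => ‖fderiv ℝ φ x‖) 2 (volume.restrict C) ∧
      ¬ (∀ᵐ x ∂(volume.restrict C), φ x = 0) ∧
      (∀ᵐ x : Fin n → ℝ, fderiv ℝ φ x (u x) = (Complex.I * ((j : ℝ) * lam)) • φ x) := by
  obtain ⟨m, rfl⟩ : ∃ m, k = m + 1 := ⟨k - 1, by omega⟩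
  subst hF hC
  set i₀ : Fin n := ⟨0, hn⟩
  set e : Fin n → ℝ := Pi.single i₀ 1
  have hψk : Periodic ψ ((m + 1) • e) := fun x => by
    rw [← hψper0 x]; congr 1; ext j; by_cases hj : j = i₀ <;> simp [e, hj]
  have hue : Periodic u e := fun x => huper x i₀
  have hζ := isPrimitiveRoot_exp (m + 1) m.succ_ne_zero
  set ζ := exp (2 * π * I / (m + 1 : ℕ))
  obtain ⟨j, hj⟩ := exists_twistedSum_not_ae_eq_zero m.succ_ne_zero hζ hψk
    (fun i hi x => hψper x i hi) fun h => hψ0 (ae_restrict_of_ae h)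
  have hroot : (ζ ^ j) ^ (m + 1) = 1 := by rw [pow_right_comm, hζ.pow_eq_one, one_pow]
  have hgood := ae_forall_add_nsmul (hψdiff.and heig) e
  refine ⟨fun x => regPow m (twistedSum ψ e (m + 1) (ζ ^ j) x), m + 1, by omega, le_rfl,
    fun x i => ?_, ?_, ?_, ?_, fun h => hj (h.mono fun x hx => regPow.eq_zero_iff.mp hx), ?_⟩
  · by_cases hi : i = i₀
    · rw [hi]; exact periodic_regPow_twistedSum hψk hroot x
    · exact congrArg (regPow m) (Periodic.twistedSum (fun x => hψper x i hi) _ x)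
  · exact hgood.mono fun x hx => (regPow.differentiable m _).comp x
      (hasFDerivAt_twistedSum (fun l _ => (hx l).1) _).differentiableAt
  · exact (memLp_twistedSum (fun l hl => hψL2.comp_add_nsmul_single hl) _).regPow m
  · exact memLp_norm_fderiv_regPow_twistedSum
      (ae_restrict_of_ae (hgood.mono fun x hx l _ => (hx l).1))
      (fun l hl => hψH1.comp_add_nsmul_single hl) (norm_eq_one_of_pow_eq_one hroot m.succ_ne_zero) m
  · filter_upwards [hgood] with x hx
    exact fderiv_regPow_twistedSum_apply_of_eigen (fun l _ => (hx l).1)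
      (fun l _ => hue.nsmul l x ▸ (hx l).2) _ m

/-- Lemma 4.2(ii): if a 1-periodic incompressible Lipschitz flow `u` on `ℝⁿ` has an
`H¹` eigenfunction `ψ` on `M = k𝕋 × 𝕋ⁿ⁻¹` with eigenvalue `iλ`, `λ ≠ 0`, then `u` has an
`H¹(𝕋ⁿ)` eigenfunction with non-zero eigenvalue `i(jλ)` for some integer `1 ≤ j ≤ k`. -/
theorem stmt_5 (n : ℕ) (hn : 0 < n)
    (u : (Fin n → ℝ) → (Fin n → ℝ)) (Ku : ℝ≥0) (hu : LipschitzWith Ku u)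
    (huper : ∀ (x : Fin n → ℝ) (j : Fin n), u (x + Pi.single j 1) = u x)
    (hdiv : ∀ᵐ x : Fin n → ℝ, ∑ i, fderiv ℝ u x (Pi.single i 1) i = 0)
    (k : ℕ) (hk : 2 ≤ k)
    (F : Set (Fin n → ℝ))
    (hF : F = Set.univ.pi fun j => Set.Ico (0 : ℝ) (if j = (⟨0, hn⟩ : Fin n) then (k : ℝ) else 1))
    (C : Set (Fin n → ℝ)) (hC : C = Set.univ.pi fun _ => Set.Ico (0 : ℝ) 1)
    (ψ : (Fin n → ℝ) → ℂ)
    (hψper0 : ∀ x : Fin n → ℝ, ψ (x + Pi.single (⟨0, hn⟩ : Fin n) (k : ℝ)) = ψ x)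
    (hψper : ∀ (x : Fin n → ℝ) (j : Fin n), j ≠ (⟨0, hn⟩ : Fin n) →
      ψ (x + Pi.single j 1) = ψ x)
    (hψdiff : ∀ᵐ x : Fin n → ℝ, DifferentiableAt ℝ ψ x)
    (hψL2 : MemLp ψ 2 (volume.restrict F))
    (hψH1 : MemLp (fun x => ‖fderiv ℝ ψ x‖) 2 (volume.restrict F))
    (hψ0 : ¬ (∀ᵐ x ∂(volume.restrict F), ψ x = 0))
    (lam : ℝ) (hlam : lam ≠ 0)
    (heig : ∀ᵐ x : Fin n → ℝ, fderiv ℝ ψ x (u x) = (Complex.I * lam) • ψ x) :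
    ∃ (φ : (Fin n → ℝ) → ℂ) (j : ℕ), 1 ≤ j ∧ j ≤ k ∧
      (∀ (x : Fin n → ℝ) (i : Fin n), φ (x + Pi.single i 1) = φ x) ∧
      (∀ᵐ x : Fin n → ℝ, DifferentiableAt ℝ φ x) ∧
      MemLp φ 2 (volume.restrict C) ∧
      MemLp (fun x => ‖fderiv ℝ φ x‖) 2 (volume.restrict C) ∧
      ¬ (∀ᵐ x ∂(volume.restrict C), φ x = 0) ∧
      (∀ᵐ x : Fin n → ℝ, fderiv ℝ φ x (u x) = (Complex.I * ((j : ℝ) * lam)) • φ x) :=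
  stmt_5_general n hn u huper k hk F hF C hC ψ hψper0 hψper hψdiff hψL2 hψH1 hψ0 lam heig
end

section
/- Let B ⊂ ℝ² be the annulus B(x₀, 1/2) \ B(x₀, 2^{−n}), and let ψ ∈ H¹(B) be such that there are two continuous curves, each joining the inner circle to the outer circle of B, on which ψ is continuous and takes the constant values a and b respectively. Then ‖∇ψ‖²_{L²(B)} ≥ |a−b|²/(2π) · (n−1) log 2 (up to an absolute constant), so in particular the H¹ norm of ψ tends to infinity as n → ∞ when |a−b| is bounded below. -/
/-!
On every circle of radius `r` about `x₀` lying in the annulus, both curves meet the circle, so `ψ`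
takes the values `a` and `b` there. The fundamental theorem of calculus along the circle and
Cauchy–Schwarz give `|a - b|² ≤ 2π r² ∫ |∇ψ|² dθ`. Multiplying by `r` and integrating over the
radii in polar coordinates produces `|a - b|² / (2π) · ∫ dr / r`, a logarithm of the ratio of the
radii.

The norm on `ℝ × ℝ` is the sup norm, so the balls are squares: a Euclidean circle of radius `r`
is contained in the annulus `ball x₀ R \ ball x₀ ρ` when `√2 ρ < r < R`, and this costs the `√2`
in the logarithm, `log (R / (√2 ρ)) = (n - 3/2) log 2` here.
-/

open MeasureTheory Real Set
open scoped ENNReal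

theorem polarCoord_symm_polarCoord (v : ℝ × ℝ) : polarCoord.symm (polarCoord v) = v := by
  have h := Complex.norm_mul_cos_add_sin_mul_I (Complex.equivRealProd.symm v)
  have hn : ‖Complex.equivRealProd.symm v‖ = √(v.1 ^ 2 + v.2 ^ 2) := by
    rw [Complex.norm_def, Complex.normSq_apply]; simp [sq]
  rw [hn] at h
  ext
  · simpa [Complex.cos_ofReal_re] using congrArg Complex.re h
  · simpa [Complex.sin_ofReal_re] using congrArg Complex.im h

theorem polarCoord_fst_polarCoord_symm {r : ℝ} (hr : 0 ≤ r) (θ : ℝ) :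
    (polarCoord (polarCoord.symm (r, θ))).1 = r := by
  simp only [polarCoord_apply, polarCoord_symm_apply]
  rw [show (r * cos θ) ^ 2 + (r * sin θ) ^ 2 = r ^ 2 by
    linear_combination r ^ 2 * cos_sq_add_sin_sq θ, Real.sqrt_sq hr]

theorem norm_le_polarCoord_fst (v : ℝ × ℝ) : ‖v‖ ≤ (polarCoord v).1 := by
  rw [polarCoord_apply, Prod.norm_def]
  refine max_le ?_ ?_ <;> rw [Real.norm_eq_abs] <;> apply Real.abs_le_sqrt <;>
    nlinarith [sq_nonneg v.1, sq_nonneg v.2]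

theorem polarCoord_fst_le_sqrt_two_mul_norm (v : ℝ × ℝ) : (polarCoord v).1 ≤ √2 * ‖v‖ := by
  rw [polarCoord_apply, ← Real.sqrt_sq (norm_nonneg v), ← Real.sqrt_mul zero_le_two]
  apply Real.sqrt_le_sqrt
  have h1 : v.1 ^ 2 ≤ ‖v‖ ^ 2 := by
    rw [← sq_abs]; gcongr; exact norm_fst_le v
  have h2 : v.2 ^ 2 ≤ ‖v‖ ^ 2 := by
    rw [← sq_abs]; gcongr; exact norm_snd_le v
  linarith

theorem norm_polarCoord_symm_le {r : ℝ} (hr : 0 ≤ r) (θ : ℝ) : ‖polarCoord.symm (r, θ)‖ ≤ r :=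
  (norm_le_polarCoord_fst _).trans (polarCoord_fst_polarCoord_symm hr θ).le

theorem le_sqrt_two_mul_norm_polarCoord_symm {r : ℝ} (hr : 0 ≤ r) (θ : ℝ) :
    r ≤ √2 * ‖polarCoord.symm (r, θ)‖ :=
  (polarCoord_fst_polarCoord_symm hr θ).symm.le.trans (polarCoord_fst_le_sqrt_two_mul_norm _)

theorem hasDerivAt_polarCoord_symm_angle (r θ : ℝ) :
    HasDerivAt (fun φ => polarCoord.symm (r, φ)) (polarCoord.symm (r, θ + π / 2)) θ := by
  simp only [polarCoord_symm_apply, cos_add_pi_div_two, sin_add_pi_div_two, mul_neg]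
  exact ((hasDerivAt_cos θ).const_mul r).prodMk ((hasDerivAt_sin θ).const_mul r) |>.congr_deriv
    (by simp)

theorem polarCoord_symm_mem_annulus (x₀ : ℝ × ℝ) {ρ R r : ℝ} (hρ : 0 ≤ ρ) (hρr : √2 * ρ < r)
    (hrR : r < R) (θ : ℝ) :
    x₀ + polarCoord.symm (r, θ) ∈ Metric.ball x₀ R \ Metric.ball x₀ ρ := by
  have hr : 0 ≤ r := le_trans (by positivity) hρr.le
  simp only [mem_sdiff, Metric.mem_ball, dist_self_add_left, not_lt]
  exact ⟨(norm_polarCoord_symm_le hr θ).trans_lt hrR, le_of_lt <| lt_of_mul_lt_mul_left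
    (hρr.trans_le (le_sqrt_two_mul_norm_polarCoord_symm hr θ)) (sqrt_nonneg 2)⟩

theorem exists_mem_Icc_polarCoord_symm_eq {γ : ℝ → ℝ × ℝ} (hγ : ContinuousOn γ (Icc 0 1))
    {x₀ : ℝ × ℝ} {r : ℝ} (h0 : √2 * dist (γ 0) x₀ ≤ r) (h1 : r ≤ dist (γ 1) x₀) :
    ∃ s ∈ Icc (0 : ℝ) 1, ∃ θ ∈ Icc (-π) π, γ s = x₀ + polarCoord.symm (r, θ) := by
  have hcont : ContinuousOn (fun s => (polarCoord (γ s - x₀)).1) (Icc 0 1) := by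
    simp only [polarCoord_apply]
    have hγx₀ := hγ.sub (continuousOn_const (c := x₀))
    fun_prop
  obtain ⟨s, hs, hrs⟩ := intermediate_value_Icc zero_le_one hcont
    ⟨(polarCoord_fst_le_sqrt_two_mul_norm _).trans (by rwa [← dist_eq_norm]),
      (by rwa [dist_eq_norm] at h1 : r ≤ ‖γ 1 - x₀‖).trans (norm_le_polarCoord_fst _)⟩
  refine ⟨s, hs, (polarCoord (γ s - x₀)).2, ?_, ?_⟩
  · simp only [polarCoord_apply]
    exact ⟨(Complex.neg_pi_lt_arg _).le, Complex.arg_le_pi _⟩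
  · rw [← hrs, Prod.mk.eta, polarCoord_symm_polarCoord, add_sub_cancel]

theorem sq_lintegral_le_measure_univ_mul {α : Type*} [MeasurableSpace α] (μ : Measure α)
    {f : α → ℝ≥0∞} (hf : AEMeasurable f μ) :
    (∫⁻ x, f x ∂μ) ^ 2 ≤ μ univ * ∫⁻ x, f x ^ 2 ∂μ := by
  have h := ENNReal.lintegral_mul_le_Lp_mul_Lq μ Real.HolderConjugate.two_two hf
    (aemeasurable_const (b := (1 : ℝ≥0∞)))
  simp only [Pi.mul_apply, mul_one, ENNReal.one_rpow, lintegral_const, one_mul] at h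
  have hsq : ∀ x : ℝ≥0∞, (x ^ (1 / 2 : ℝ)) ^ 2 = x := fun x => by
    rw [← ENNReal.rpow_natCast, ← ENNReal.rpow_mul]; norm_num
  calc (∫⁻ x, f x ∂μ) ^ 2
      ≤ ((∫⁻ x, f x ^ (2 : ℝ) ∂μ) ^ (1 / 2 : ℝ) * μ univ ^ (1 / 2 : ℝ)) ^ 2 := by gcongr
    _ = μ univ * ∫⁻ x, f x ^ 2 ∂μ := by
      rw [mul_pow, hsq, hsq, mul_comm]
      simp_rw [ENNReal.rpow_two]

theorem enorm_sub_le_setLIntegral_enorm_deriv {E : Type*} [NormedAddCommGroup E]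
    [NormedSpace ℝ E] [CompleteSpace E] {f : ℝ → E} {a b s t : ℝ}
    (hf : ∀ x ∈ Icc a b, DifferentiableAt ℝ f x) (hs : s ∈ Icc a b) (ht : t ∈ Icc a b) :
    ‖f t - f s‖ₑ ≤ ∫⁻ x in Ioo a b, ‖deriv f x‖ₑ := by
  by_cases htop : ∫⁻ x in Ioo a b, ‖deriv f x‖ₑ = ∞
  · simp [htop]
  have hsub : uIcc s t ⊆ Icc a b := uIcc_subset_Icc hs ht
  have hint : IntegrableOn (deriv f) (Icc a b) :=
    (integrableOn_Icc_iff_integrableOn_Ioo).mpr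
      ⟨(stronglyMeasurable_deriv f).aestronglyMeasurable, lt_top_iff_ne_top.mpr htop⟩
  rw [← intervalIntegral.integral_eq_sub_of_hasDerivAt
    (fun x hx => (hf x (hsub hx)).hasDerivAt) (hint.mono_set hsub).intervalIntegrable]
  calc ‖∫ x in s..t, deriv f x‖ₑ = ‖∫ x in uIoc s t, deriv f x‖ₑ := by
        simp_rw [← ofReal_norm, intervalIntegral.norm_integral_eq_norm_integral_uIoc]
    _ ≤ ∫⁻ x in uIoc s t, ‖deriv f x‖ₑ := enorm_integral_le_lintegral_enorm _
    _ ≤ ∫⁻ x in Icc a b, ‖deriv f x‖ₑ := lintegral_mono_set (uIoc_subset_uIcc.trans hsub)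
    _ = ∫⁻ x in Ioo a b, ‖deriv f x‖ₑ := setLIntegral_congr Ioo_ae_eq_Icc.symm

theorem setLIntegral_Ioo_ofReal_inv {a b : ℝ} (ha : 0 < a) (hab : a ≤ b) :
    ∫⁻ r in Ioo a b, ENNReal.ofReal r⁻¹ = ENNReal.ofReal (Real.log (b / a)) := by
  have hint : IntegrableOn (fun r : ℝ => r⁻¹) (Ioo a b) :=
    ((continuousOn_inv₀.mono fun x hx => (ha.trans_le hx.1).ne').integrableOn_Icc).mono_set
      Ioo_subset_Icc_self
  have hpos : 0 ≤ᵐ[volume.restrict (Ioo a b)] fun r : ℝ => r⁻¹ :=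
    ae_restrict_of_forall_mem measurableSet_Ioo fun r hr => (inv_pos.mpr (ha.trans hr.1)).le
  rw [← ofReal_integral_eq_lintegral_ofReal hint hpos, ← integral_Ioc_eq_integral_Ioo,
    ← intervalIntegral.integral_of_le hab, integral_inv_of_pos ha (ha.trans_le hab)]

theorem setLIntegral_polar_le_setLIntegral (x₀ : ℝ × ℝ) {U : Set (ℝ × ℝ)} (hU : MeasurableSet U)
    {F : ℝ × ℝ → ℝ≥0∞} (hF : Measurable F) {r₁ r₂ : ℝ} (hr₁ : 0 ≤ r₁)
    (hsub : ∀ r ∈ Ioo r₁ r₂, ∀ θ, x₀ + polarCoord.symm (r, θ) ∈ U) :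
    ∫⁻ r in Ioo r₁ r₂, ENNReal.ofReal r * ∫⁻ θ in Ioo (-π) π, F (x₀ + polarCoord.symm (r, θ)) ≤
      ∫⁻ x in U, F x := by
  set G : ℝ × ℝ → ℝ≥0∞ := fun y => U.indicator F (x₀ + y)
  have hG : Measurable G := (hF.indicator hU).comp (measurable_const_add x₀)
  have htarget : Ioo r₁ r₂ ×ˢ Ioo (-π) π ⊆ polarCoord.target :=
    prod_mono (fun r hr => hr₁.trans_lt hr.1) subset_rfl
  calc ∫⁻ r in Ioo r₁ r₂, ENNReal.ofReal r * ∫⁻ θ in Ioo (-π) π, F (x₀ + polarCoord.symm (r, θ))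
      = ∫⁻ r in Ioo r₁ r₂, ∫⁻ θ in Ioo (-π) π, ENNReal.ofReal r • G (polarCoord.symm (r, θ)) := by
        refine setLIntegral_congr_fun measurableSet_Ioo fun r hr => ?_
        rw [← lintegral_const_mul' _ _ ENNReal.ofReal_ne_top]
        refine setLIntegral_congr_fun measurableSet_Ioo fun θ _ => ?_
        simp only [G, indicator_of_mem (hsub r hr θ), smul_eq_mul]
    _ = ∫⁻ p in Ioo r₁ r₂ ×ˢ Ioo (-π) π, ENNReal.ofReal p.1 • G (polarCoord.symm p) := by
        rw [Measure.volume_eq_prod, setLIntegral_prod]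
        exact (measurable_fst.ennreal_ofReal.smul
          (hG.comp continuous_polarCoord_symm.measurable)).aemeasurable
    _ ≤ ∫⁻ p in polarCoord.target, ENNReal.ofReal p.1 • G (polarCoord.symm p) :=
        lintegral_mono_set htarget
    _ = ∫⁻ y, U.indicator F (x₀ + y) := lintegral_comp_polarCoord_symm G
    _ = ∫⁻ x in U, F x := by
        rw [lintegral_add_left_eq_self, lintegral_indicator hU]

section

variable {E : Type*} [NormedAddCommGroup E] [NormedSpace ℝ E] [CompleteSpace E]

theorem enorm_sub_sq_le_circle_energy {ψ : ℝ × ℝ → E} {x₀ : ℝ × ℝ} {r : ℝ} (hr : 0 ≤ r)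
    (hψ : ∀ θ, DifferentiableAt ℝ ψ (x₀ + polarCoord.symm (r, θ))) {θ₁ θ₂ : ℝ}
    (hθ₁ : θ₁ ∈ Icc (-π) π) (hθ₂ : θ₂ ∈ Icc (-π) π) :
    ‖ψ (x₀ + polarCoord.symm (r, θ₁)) - ψ (x₀ + polarCoord.symm (r, θ₂))‖ₑ ^ 2 ≤
      ENNReal.ofReal (2 * π * r ^ 2) *
        ∫⁻ θ in Ioo (-π) π, ‖fderiv ℝ ψ (x₀ + polarCoord.symm (r, θ))‖ₑ ^ 2 := by
  set f : ℝ → E := fun θ => ψ (x₀ + polarCoord.symm (r, θ))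
  have hf : ∀ θ, HasDerivAt f (fderiv ℝ ψ (x₀ + polarCoord.symm (r, θ))
      (polarCoord.symm (r, θ + π / 2))) θ := fun θ =>
    (hψ θ).hasFDerivAt.comp_hasDerivAt θ ((hasDerivAt_polarCoord_symm_angle r θ).const_add x₀)
  have hderiv_le : ∀ θ, ‖deriv f θ‖ₑ ≤
      ‖fderiv ℝ ψ (x₀ + polarCoord.symm (r, θ))‖ₑ * ENNReal.ofReal r := fun θ => by
    rw [(hf θ).deriv]
    refine ContinuousLinearMap.le_opENorm_of_le _ ?_
    rw [← ofReal_norm]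
    exact ENNReal.ofReal_le_ofReal (norm_polarCoord_symm_le hr _)
  calc ‖f θ₁ - f θ₂‖ₑ ^ 2 ≤ (∫⁻ θ in Ioo (-π) π, ‖deriv f θ‖ₑ) ^ 2 := by
        gcongr
        exact enorm_sub_le_setLIntegral_enorm_deriv (fun θ _ => (hf θ).differentiableAt) hθ₂ hθ₁
    _ ≤ ENNReal.ofReal (2 * π) * ∫⁻ θ in Ioo (-π) π, ‖deriv f θ‖ₑ ^ 2 := by
        convert sq_lintegral_le_measure_univ_mul _
          (stronglyMeasurable_deriv f).aestronglyMeasurable.enorm using 2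
        rw [Measure.restrict_apply_univ, Real.volume_Ioo]
        ring_nf
    _ ≤ ENNReal.ofReal (2 * π) * ∫⁻ θ in Ioo (-π) π,
          ENNReal.ofReal (r ^ 2) * ‖fderiv ℝ ψ (x₀ + polarCoord.symm (r, θ))‖ₑ ^ 2 := by
        gcongr with θ
        rw [ENNReal.ofReal_pow hr, ← mul_pow, mul_comm]
        gcongr
        exact hderiv_le θ
    _ = _ := by
        rw [lintegral_const_mul' _ _ ENNReal.ofReal_ne_top, ← mul_assoc,
          ← ENNReal.ofReal_mul (by positivity), mul_assoc]

theorem enorm_sub_sq_le_circle_energy_of_curves {ψ : ℝ × ℝ → E} {x₀ : ℝ × ℝ} {ρ R r : ℝ}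
    (hρ : 0 ≤ ρ) (hρr : √2 * ρ < r) (hrR : r < R)
    (hψ : ∀ x ∈ Metric.ball x₀ R \ Metric.ball x₀ ρ, DifferentiableAt ℝ ψ x)
    {γ₁ γ₂ : ℝ → ℝ × ℝ} (hγ₁ : ContinuousOn γ₁ (Icc 0 1)) (hγ₂ : ContinuousOn γ₂ (Icc 0 1))
    (hγ₁₀ : dist (γ₁ 0) x₀ ≤ ρ) (hγ₁₁ : R ≤ dist (γ₁ 1) x₀)
    (hγ₂₀ : dist (γ₂ 0) x₀ ≤ ρ) (hγ₂₁ : R ≤ dist (γ₂ 1) x₀)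
    {a b : E} (ha : ∀ s ∈ Icc (0 : ℝ) 1, ψ (γ₁ s) = a) (hb : ∀ s ∈ Icc (0 : ℝ) 1, ψ (γ₂ s) = b) :
    ‖a - b‖ₑ ^ 2 ≤ ENNReal.ofReal (2 * π * r ^ 2) *
      ∫⁻ θ in Ioo (-π) π, ‖fderiv ℝ ψ (x₀ + polarCoord.symm (r, θ))‖ₑ ^ 2 := by
  have hr : 0 ≤ r := le_trans (by positivity) hρr.le
  have hcross : ∀ {γ : ℝ → ℝ × ℝ}, ContinuousOn γ (Icc 0 1) → dist (γ 0) x₀ ≤ ρ →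
      R ≤ dist (γ 1) x₀ → ∃ s ∈ Icc (0 : ℝ) 1, ∃ θ ∈ Icc (-π) π,
        γ s = x₀ + polarCoord.symm (r, θ) := fun hγ h0 h1 =>
    exists_mem_Icc_polarCoord_symm_eq hγ
      ((mul_le_mul_of_nonneg_left h0 (by positivity)).trans hρr.le) (hrR.le.trans h1)
  obtain ⟨s₁, hs₁, θ₁, hθ₁, hγθ₁⟩ := hcross hγ₁ hγ₁₀ hγ₁₁
  obtain ⟨s₂, hs₂, θ₂, hθ₂, hγθ₂⟩ := hcross hγ₂ hγ₂₀ hγ₂₁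
  rw [← ha s₁ hs₁, ← hb s₂ hs₂, hγθ₁, hγθ₂]
  exact enorm_sub_sq_le_circle_energy hr
    (fun θ => hψ _ (polarCoord_symm_mem_annulus x₀ hρ hρr hrR θ)) hθ₁ hθ₂

theorem enorm_sub_sq_mul_log_le_lintegral_annulus {ψ : ℝ × ℝ → E} {x₀ : ℝ × ℝ} {ρ R : ℝ}
    (hρ : 0 < ρ) (hρR : √2 * ρ ≤ R)
    (hψ : ∀ x ∈ Metric.ball x₀ R \ Metric.ball x₀ ρ, DifferentiableAt ℝ ψ x)
    {γ₁ γ₂ : ℝ → ℝ × ℝ} (hγ₁ : ContinuousOn γ₁ (Icc 0 1)) (hγ₂ : ContinuousOn γ₂ (Icc 0 1))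
    (hγ₁₀ : dist (γ₁ 0) x₀ ≤ ρ) (hγ₁₁ : R ≤ dist (γ₁ 1) x₀)
    (hγ₂₀ : dist (γ₂ 0) x₀ ≤ ρ) (hγ₂₁ : R ≤ dist (γ₂ 1) x₀)
    {a b : E} (ha : ∀ s ∈ Icc (0 : ℝ) 1, ψ (γ₁ s) = a) (hb : ∀ s ∈ Icc (0 : ℝ) 1, ψ (γ₂ s) = b) :
    ‖a - b‖ₑ ^ 2 * ENNReal.ofReal (Real.log (R / (√2 * ρ)) / (2 * π)) ≤
      ∫⁻ x in Metric.ball x₀ R \ Metric.ball x₀ ρ, ‖fderiv ℝ ψ x‖ₑ ^ 2 := by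
  have hl : 0 < √2 * ρ := by positivity
  set C := ‖a - b‖ₑ ^ 2 * ENNReal.ofReal (2 * π)⁻¹
  have hcircle : ∀ r ∈ Ioo (√2 * ρ) R, C * ENNReal.ofReal r⁻¹ ≤ ENNReal.ofReal r *
      ∫⁻ θ in Ioo (-π) π, ‖fderiv ℝ ψ (x₀ + polarCoord.symm (r, θ))‖ₑ ^ 2 := fun r hr => by
    have hr0 : 0 < r := hl.trans hr.1
    calc C * ENNReal.ofReal r⁻¹
        = ‖a - b‖ₑ ^ 2 * ENNReal.ofReal (2 * π * r ^ 2)⁻¹ * ENNReal.ofReal r := by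
          rw [mul_assoc, mul_assoc, ← ENNReal.ofReal_mul (by positivity),
            ← ENNReal.ofReal_mul (by positivity)]
          congr 2
          field_simp
      _ ≤ ENNReal.ofReal r *
          ∫⁻ θ in Ioo (-π) π, ‖fderiv ℝ ψ (x₀ + polarCoord.symm (r, θ))‖ₑ ^ 2 := by
          rw [mul_comm _ (ENNReal.ofReal r)]
          gcongr
          rw [ENNReal.ofReal_inv_of_pos (by positivity), ← div_eq_mul_inv,
            ENNReal.div_le_iff (by positivity) ENNReal.ofReal_ne_top, mul_comm]
          exact enorm_sub_sq_le_circle_energy_of_curves hρ.le hr.1 hr.2 hψ hγ₁ hγ₂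
            hγ₁₀ hγ₁₁ hγ₂₀ hγ₂₁ ha hb
  calc ‖a - b‖ₑ ^ 2 * ENNReal.ofReal (Real.log (R / (√2 * ρ)) / (2 * π))
      = ∫⁻ r in Ioo (√2 * ρ) R, C * ENNReal.ofReal r⁻¹ := by
        rw [lintegral_const_mul' _ _ (by finiteness), setLIntegral_Ioo_ofReal_inv hl hρR,
          mul_assoc, ← ENNReal.ofReal_mul (by positivity), div_eq_inv_mul]
    _ ≤ ∫⁻ r in Ioo (√2 * ρ) R, ENNReal.ofReal r *
          ∫⁻ θ in Ioo (-π) π, ‖fderiv ℝ ψ (x₀ + polarCoord.symm (r, θ))‖ₑ ^ 2 :=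
        setLIntegral_mono' measurableSet_Ioo hcircle
    _ ≤ ∫⁻ x in Metric.ball x₀ R \ Metric.ball x₀ ρ, ‖fderiv ℝ ψ x‖ₑ ^ 2 :=
        setLIntegral_polar_le_setLIntegral x₀ (measurableSet_ball.diff measurableSet_ball)
          ((measurable_fderiv ℝ ψ).enorm.pow_const 2) hl.le
          fun r hr => polarCoord_symm_mem_annulus x₀ hρ.le hr.1 hr.2

end

theorem log_half_div_sqrt_two_mul_two_zpow (n : ℕ) :
    Real.log (1 / 2 / (√2 * 2 ^ (-(n : ℤ)))) = ((n : ℝ) - 3 / 2) * Real.log 2 := by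
  rw [Real.log_div (by norm_num) (by positivity), Real.log_mul (by positivity) (by positivity),
    Real.log_sqrt zero_le_two, Real.log_zpow, one_div, Real.log_inv]
  push_cast
  ring

/-- The 2D capacity-type estimate: if `ψ` is differentiable on the annulus
`B = B(x₀,1/2) \ B(x₀,2⁻ⁿ)` with square-integrable gradient, and there are two curves
joining the inner and outer circles on which `ψ` is constant equal to `a` resp. `b`, then
`∫_B |∇ψ|² ≥ c |a-b|² (n-1) log 2` for an absolute constant `c > 0`. -/
theorem stmt_7 :
    ∃ c : ℝ, 0 < c ∧
      ∀ (n : ℕ), 2 ≤ n → ∀ (x₀ : ℝ × ℝ) (ψ : ℝ × ℝ → ℝ) (B : Set (ℝ × ℝ)),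
        B = Metric.ball x₀ (1 / 2) \ Metric.ball x₀ ((2 : ℝ) ^ (-(n : ℤ))) →
        (∀ x ∈ B, DifferentiableAt ℝ ψ x) →
        IntegrableOn (fun x => ‖fderiv ℝ ψ x‖ ^ 2) B volume →
        ∀ (a b : ℝ) (γ₁ γ₂ : ℝ → ℝ × ℝ),
          ContinuousOn γ₁ (Set.Icc 0 1) → ContinuousOn γ₂ (Set.Icc 0 1) →
          (∀ s ∈ Set.Icc (0 : ℝ) 1, γ₁ s ∈ closure B) →
          (∀ s ∈ Set.Icc (0 : ℝ) 1, γ₂ s ∈ closure B) →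
          dist (γ₁ 0) x₀ = (2 : ℝ) ^ (-(n : ℤ)) → dist (γ₁ 1) x₀ = 1 / 2 →
          dist (γ₂ 0) x₀ = (2 : ℝ) ^ (-(n : ℤ)) → dist (γ₂ 1) x₀ = 1 / 2 →
          (∀ s ∈ Set.Icc (0 : ℝ) 1, ψ (γ₁ s) = a) →
          (∀ s ∈ Set.Icc (0 : ℝ) 1, ψ (γ₂ s) = b) →
          c * |a - b| ^ 2 * (((n : ℝ) - 1) * Real.log 2) ≤ ∫ x in B, ‖fderiv ℝ ψ x‖ ^ 2 := by
  refine ⟨(8 * π)⁻¹, by positivity, ?_⟩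
  intro n hn x₀ ψ B hB hψ hint a b γ₁ γ₂ hγ₁ hγ₂ _ _ hγ₁₀ hγ₁₁ hγ₂₀ hγ₂₁ ha hb
  have hρ : (0 : ℝ) < 2 ^ (-(n : ℤ)) := by positivity
  have hρR : √2 * 2 ^ (-(n : ℤ)) ≤ (1 / 2 : ℝ) := calc
    _ ≤ (2 : ℝ) * 2 ^ (-(2 : ℤ)) := by
      gcongr
      · exact Real.sqrt_le_iff.mpr ⟨by norm_num, by norm_num⟩
      · exact one_le_two
      · omega
    _ = 1 / 2 := by norm_num
  have key := enorm_sub_sq_mul_log_le_lintegral_annulus hρ hρR (hB ▸ hψ) hγ₁ hγ₂ hγ₁₀.le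
    hγ₁₁.ge hγ₂₀.le hγ₂₁.ge ha hb
  subst hB
  rw [← ENNReal.ofReal_le_ofReal_iff (integral_nonneg fun x => by positivity),
    ofReal_integral_eq_lintegral_ofReal hint (.of_forall fun x => by positivity)]
  simp_rw [ENNReal.ofReal_pow (norm_nonneg _), ofReal_norm]
  refine le_trans ?_ key
  rw [log_half_div_sqrt_two_mul_two_zpow, ← ofReal_norm, Real.norm_eq_abs,
    ← ENNReal.ofReal_pow (abs_nonneg _), ← ENNReal.ofReal_mul (by positivity)]
  refine ENNReal.ofReal_le_ofReal ?_
  have hn' : (2 : ℝ) ≤ n := by exact_mod_cast hn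
  rw [mul_div_assoc', le_div_iff₀ (by positivity)]
  field_simp
  nlinarith [mul_nonneg (sq_nonneg |a - b|) (Real.log_nonneg one_le_two)]
end

section
/- Let p: 𝕋 → 𝕋 be C¹ with ∫₀¹ p'(s) ds = 0 and Ũ: 𝕋 → ℝ be C¹, and define the percolating flow u(x₁, x₂) = (Ũ'(y), p'(x₁)Ũ'(y)) with y = {p(x₁) − x₂} on 𝕋². Suppose Ũ' is constant equal to C ≠ 0 on an interval [a,b] with a < b. Then for any smooth function θ supported in [a,b], ψ(x₁,x₂) = e^{2πi x₁} θ(y) is an H¹(𝕋²) eigenfunction of u with eigenvalue 2πiC, i.e. u·∇ψ = 2πiC ψ. -/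
open MeasureTheory

private lemma key_period (U : ℝ → ℝ) (hUper : Function.Periodic U 1) (n : ℤ) (s : ℝ) :
    deriv U (s + n) = deriv U s := by
  have : (fun x => U (x + (n : ℝ))) = U := by
    funext x
    have := (hUper.int_mul n) x
    simpa using this
  calc deriv U (s + n) = deriv (fun x => U (x + (n : ℝ))) s := (deriv_comp_add_const U n s).symm
  _ = deriv U s := by rw [this]

/-- Example 6.3 (construction of eigenfunctions of percolating flows): if `Ũ' ≡ C ≠ 0` on
`[a,b]` and `θ` is smooth, 1-periodic and supported in `[a,b]` (within one period), then
`ψ(x₁,x₂) = e^{2πi x₁} θ(p(x₁) - x₂)` is a (smooth, hence `H¹`) eigenfunction of the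
percolating flow `u = (Ũ'(y), p'(x₁)Ũ'(y))`, `y = p(x₁) - x₂`, with eigenvalue `2πiC`. -/
theorem stmt_14 (p U : ℝ → ℝ)
    (hp : ContDiff ℝ 1 p) (hpper : Function.Periodic p 1)
    (hpint : (∫ s in (0 : ℝ)..1, deriv p s) = 0)
    (hU : ContDiff ℝ 1 U) (hUper : Function.Periodic U 1)
    (u : ℝ × ℝ → ℝ × ℝ)
    (hu : ∀ x : ℝ × ℝ, u x = (deriv U (p x.1 - x.2), deriv p x.1 * deriv U (p x.1 - x.2)))
    (a b C : ℝ) (hab : a < b) (hC : C ≠ 0) (ha : 0 ≤ a) (hb : b ≤ 1)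
    (hplateau : ∀ s ∈ Set.Icc a b, deriv U s = C)
    (θ : ℝ → ℝ) (hθ : ContDiff ℝ (⊤ : ℕ∞) θ) (hθper : Function.Periodic θ 1)
    (hθsupp : ∀ s ∈ Set.Icc (0 : ℝ) 1, θ s ≠ 0 → s ∈ Set.Icc a b)
    (ψ : ℝ × ℝ → ℂ)
    (hψ : ∀ x : ℝ × ℝ,
      ψ x = Complex.exp (2 * Real.pi * Complex.I * x.1) * (θ (p x.1 - x.2) : ℂ)) :
    Differentiable ℝ ψ ∧
      (∀ x₁ x₂ : ℝ, ψ (x₁ + 1, x₂) = ψ (x₁, x₂) ∧ ψ (x₁, x₂ + 1) = ψ (x₁, x₂)) ∧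
      (∀ x : ℝ × ℝ,
        fderiv ℝ ψ x (u x) = ((2 * Real.pi * C : ℝ) : ℂ) * Complex.I * ψ x) := by
  -- key: wherever θ ≠ 0, deriv U = C
  have key : ∀ y : ℝ, θ y ≠ 0 → deriv U y = C := by
    intro y hy
    set s := Int.fract y with hs
    have hsy : y = s + ⌊y⌋ := by rw [hs, Int.fract]; ring
    have hθs : θ s ≠ 0 := by
      rw [hsy] at hy
      have h2 : θ (s + (⌊y⌋ : ℝ) * 1) = θ s := (hθper.int_mul ⌊y⌋) s
      rw [mul_one] at h2
      rwa [h2] at hy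
    have hmem : s ∈ Set.Icc a b :=
      hθsupp s ⟨Int.fract_nonneg y, (Int.fract_lt_one y).le⟩ hθs
    rw [hsy, key_period U hUper ⌊y⌋ s]
    exact hplateau s hmem
  have hθd : Differentiable ℝ θ := hθ.differentiable (by simp)
  have hpd : Differentiable ℝ p := hp.differentiable one_ne_zero
  have hmain : ∀ x : ℝ × ℝ, HasFDerivAt ψ
      ((Complex.exp (2 * Real.pi * Complex.I * x.1) •
          (Complex.ofRealCLM.comp ((deriv θ (p x.1 - x.2)) •
            ((deriv p x.1) • ContinuousLinearMap.fst ℝ ℝ ℝ - ContinuousLinearMap.snd ℝ ℝ ℝ)))) +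
        ((θ (p x.1 - x.2) : ℂ) •
          (Complex.exp (2 * Real.pi * Complex.I * x.1) •
            ((2 * Real.pi * Complex.I : ℂ) •
              (Complex.ofRealCLM.comp (ContinuousLinearMap.fst ℝ ℝ ℝ)).restrictScalars ℝ)))) x := by
    intro x
    set y := p x.1 - x.2 with hy
    -- derivative of z ↦ p z.1 - z.2
    have hq : HasFDerivAt (fun z : ℝ × ℝ => p z.1 - z.2)
        ((deriv p x.1) • ContinuousLinearMap.fst ℝ ℝ ℝ - ContinuousLinearMap.snd ℝ ℝ ℝ) x := by
      have h1 : HasFDerivAt (fun z : ℝ × ℝ => p z.1)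
          ((deriv p x.1) • ContinuousLinearMap.fst ℝ ℝ ℝ) x :=
        (hpd x.1).hasDerivAt.comp_hasFDerivAt x (hasFDerivAt_fst)
      exact h1.sub (hasFDerivAt_snd)
    have hg : HasFDerivAt (fun z : ℝ × ℝ => ((θ (p z.1 - z.2) : ℝ) : ℂ))
        (Complex.ofRealCLM.comp ((deriv θ y) •
          ((deriv p x.1) • ContinuousLinearMap.fst ℝ ℝ ℝ - ContinuousLinearMap.snd ℝ ℝ ℝ))) x := by
      have h2 : HasFDerivAt (fun z : ℝ × ℝ => θ (p z.1 - z.2))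
          ((deriv θ y) •
            ((deriv p x.1) • ContinuousLinearMap.fst ℝ ℝ ℝ - ContinuousLinearMap.snd ℝ ℝ ℝ)) x :=
        (hθd y).hasDerivAt.comp_hasFDerivAt x hq
      exact Complex.ofRealCLM.hasFDerivAt.comp x h2
    have hf : HasFDerivAt (fun z : ℝ × ℝ => Complex.exp (2 * Real.pi * Complex.I * z.1))
        (Complex.exp (2 * Real.pi * Complex.I * x.1) •
          ((2 * Real.pi * Complex.I : ℂ) •
            (Complex.ofRealCLM.comp (ContinuousLinearMap.fst ℝ ℝ ℝ)).restrictScalars ℝ)) x := by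
      have hL : HasFDerivAt (fun z : ℝ × ℝ => (2 * Real.pi * Complex.I : ℂ) * (z.1 : ℂ))
          ((2 * Real.pi * Complex.I : ℂ) •
            (Complex.ofRealCLM.comp (ContinuousLinearMap.fst ℝ ℝ ℝ)).restrictScalars ℝ) x := by
        have := (((2 * Real.pi * Complex.I : ℂ) •
            (Complex.ofRealCLM.comp (ContinuousLinearMap.fst ℝ ℝ ℝ)).restrictScalars ℝ)).hasFDerivAt (x := x)
        convert this using 2
        simp [smul_eq_mul]
      exact (Complex.hasDerivAt_exp _).comp_hasFDerivAt x hL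
    have hψeq : ψ = fun z : ℝ × ℝ =>
        Complex.exp (2 * Real.pi * Complex.I * z.1) * ((θ (p z.1 - z.2) : ℝ) : ℂ) :=
      funext hψ
    rw [hψeq]
    exact hf.mul hg
  refine ⟨fun x => (hmain x).differentiableAt, ?_, ?_⟩
  · intro x₁ x₂
    constructor
    · rw [hψ, hψ]
      simp only
      rw [hpper x₁]
      congr 1
      rw [show ((x₁ + 1 : ℝ) : ℂ) = (x₁ : ℂ) + 1 by push_cast; ring, mul_add, mul_one,
        Complex.exp_add, Complex.exp_two_pi_mul_I, mul_one]
    · rw [hψ, hψ]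
      simp only
      congr 2
      rw [show p x₁ - (x₂ + 1) = (p x₁ - x₂) - 1 by ring]
      exact hθper.sub_eq (p x₁ - x₂)
  · intro x
    rw [(hmain x).fderiv, hu x, hψ x]
    set y := p x.1 - x.2 with hy
    simp only [ContinuousLinearMap.add_apply, ContinuousLinearMap.smul_apply,
      ContinuousLinearMap.comp_apply, ContinuousLinearMap.sub_apply,
      ContinuousLinearMap.coe_fst', ContinuousLinearMap.coe_snd',
      ContinuousLinearMap.coe_restrictScalars', Complex.ofRealCLM_apply]
    have h0 : deriv p x.1 * deriv U y - deriv p x.1 * deriv U y = 0 := by ring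
    by_cases hz : θ y = 0
    · simp [hz, smul_eq_mul]
    · have hkey : deriv U y = C := key y hz
      simp only [smul_eq_mul, hkey]
      push_cast
      ring
end

section
/- With the percolating flow u(x₁,x₂) = (Ũ'(y), p'(x₁)Ũ'(y)), y = {p(x₁) − x₂}, on 𝕋²: if ψ ∈ H¹(𝕋²) satisfies u·∇ψ = iλψ with λ ≠ 0, and ψ is of the form ψ(x₁,x₂) = e^{iλ x₁/Ũ'(y)} θ(y) on the set where Ũ'(y) ≠ 0 with ψ = 0 where Ũ' = 0, then λ/Ũ'(y) ∈ 2πℤ for every y with θ(y) ≠ 0; consequently, if Ũ' has no non-trivial plateau on which it is a non-zero constant, then u has no H¹(𝕋²) eigenfunctions with non-zero eigenvalue. -/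
/-!
Along each streamline `y = p(x₁) - x₂ = const` the ansatz is `e^{iλx₁/Ũ'(y)} θ(y)`, and
`p` is 1-periodic, so 1-periodicity of `ψ` in `x₁` forces `e^{iλ/Ũ'(y)} = 1` whenever
`θ(y) ≠ 0`. A non-trivial eigenfunction is non-zero near a point where it is differentiable,
hence `θ ≠ 0` and `Ũ' ≠ 0` on a whole interval of streamlines. There `Ũ'` is continuous with
values in the countable set `{λ/(2πm) : m ∈ ℤ}`, so it is constant: a non-zero plateau.
-/

open MeasureTheory Filter Topology Set

def HasNonzeroPlateau (g : ℝ → ℝ) : Prop :=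
  ∃ a b : ℝ, a < b ∧ ∃ C : ℝ, C ≠ 0 ∧ ∀ s ∈ Icc a b, g s = C

theorem IsPreconnected.constant_of_mapsTo_countable {X Y : Type*} [TopologicalSpace X]
    [MetricSpace Y] {S : Set X} (hS : IsPreconnected S) {T : Set Y} (hT : T.Countable)
    {f : X → Y} (hf : ContinuousOn f S) (hfT : MapsTo f S T) {x y : X} (hx : x ∈ S)
    (hy : y ∈ S) : f x = f y :=
  hT.isTotallyDisconnected _ (image_subset_iff.2 hfT) (hS.image f hf)
    (mem_image_of_mem f hx) (mem_image_of_mem f hy)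

theorem hasNonzeroPlateau_of_eventually_mem_countable {g : ℝ → ℝ} (hg : Continuous g)
    {T : Set ℝ} (hT : T.Countable) {y₀ : ℝ} (h : ∀ᶠ s in 𝓝 y₀, g s ∈ T ∧ g s ≠ 0) :
    HasNonzeroPlateau g := by
  obtain ⟨ε, hε, hIcc⟩ := (nhds_basis_Icc_pos y₀).eventually_iff.1 h
  have hy₀ : y₀ ∈ Icc (y₀ - ε) (y₀ + ε) := ⟨by linarith, by linarith⟩
  refine ⟨y₀ - ε, y₀ + ε, by linarith, g y₀, (hIcc hy₀).2, fun s hs => ?_⟩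
  exact isPreconnected_Icc.constant_of_mapsTo_countable hT hg.continuousOn
    (fun t ht => (hIcc ht).1) hs hy₀

theorem exists_int_eq_two_pi_mul_of_exp_eq_one {lam c : ℝ} (hc : c ≠ 0)
    (h : Complex.exp (Complex.I * lam / c) = 1) : ∃ m : ℤ, lam = 2 * Real.pi * m * c := by
  obtain ⟨m, hm⟩ := Complex.exp_eq_one_iff.1 h
  refine ⟨m, ?_⟩
  have hc' : (c : ℂ) ≠ 0 := by exact_mod_cast hc
  have : (lam : ℂ) = 2 * Real.pi * m * c := by
    field_simp at hm
    linear_combination hm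
  exact_mod_cast this

theorem exists_int_eq_two_pi_mul_of_periodic_ansatz {p g : ℝ → ℝ} {lam : ℝ} {ψ : ℝ × ℝ → ℂ}
    {θ : ℝ → ℂ} (hp : Function.Periodic p 1)
    (hψ : ∀ x₁ x₂ : ℝ, ψ (x₁ + 1, x₂) = ψ (x₁, x₂))
    (hform : ∀ x : ℝ × ℝ, g (p x.1 - x.2) ≠ 0 →
      ψ x = Complex.exp (Complex.I * lam * x.1 / g (p x.1 - x.2)) * θ (p x.1 - x.2))
    {y : ℝ} (hθ : θ y ≠ 0) (hg : g y ≠ 0) : ∃ m : ℤ, lam = 2 * Real.pi * m * g y := by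
  have hy : p 0 - (p 0 - y) = y := by ring
  have h₀ := hform (0, p 0 - y)
  have h₁ := hform (1, p 0 - y)
  simp only [hy, show p 1 = p 0 by simpa using hp 0] at h₀ h₁
  have hper := hψ 0 (p 0 - y)
  rw [zero_add, h₁ hg, h₀ hg] at hper
  refine exists_int_eq_two_pi_mul_of_exp_eq_one hg ?_
  simpa using mul_right_cancel₀ hθ hper

theorem eventually_ne_zero_along_streamlines {ψ : ℝ × ℝ → ℂ} {x₀ : ℝ × ℝ}
    (hψ : ContinuousAt ψ x₀) (h : ψ x₀ ≠ 0) (p : ℝ → ℝ) :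
    ∀ᶠ s in 𝓝 (p x₀.1 - x₀.2), ψ (x₀.1, p x₀.1 - s) ≠ 0 := by
  have hline : Tendsto (fun s => (x₀.1, p x₀.1 - s)) (𝓝 (p x₀.1 - x₀.2)) (𝓝 x₀) :=
    (continuous_const.prodMk (continuous_const.sub continuous_id)).tendsto' _ _ (by simp)
  exact hline.eventually (hψ.eventually_ne h)

theorem stmt_15_general (p U : ℝ → ℝ)
    (hpper : Function.Periodic p 1)
    (hU : ContDiff ℝ 1 U)
    (lam : ℝ) (hlam : lam ≠ 0)
    (ψ : ℝ × ℝ → ℂ) (θ : ℝ → ℂ)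
    (hψper1 : ∀ x₁ x₂ : ℝ, ψ (x₁ + 1, x₂) = ψ (x₁, x₂))
    (hψdiff : ∀ᵐ x : ℝ × ℝ, DifferentiableAt ℝ ψ x)
    (hψ0 : ¬ (∀ᵐ x : ℝ × ℝ, ψ x = 0))
    (hform : ∀ x : ℝ × ℝ,
      (deriv U (p x.1 - x.2) ≠ 0 →
        ψ x = Complex.exp (Complex.I * lam * x.1 / Complex.ofReal (deriv U (p x.1 - x.2))) *
          θ (p x.1 - x.2)) ∧
      (deriv U (p x.1 - x.2) = 0 → ψ x = 0)) :
    (∀ y : ℝ, θ y ≠ 0 → deriv U y ≠ 0 →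
      ∃ m : ℤ, lam = 2 * Real.pi * m * deriv U y) ∧
    ((¬ ∃ a b : ℝ, a < b ∧ ∃ C : ℝ, C ≠ 0 ∧ ∀ s ∈ Set.Icc a b, deriv U s = C) → False) := by
  have resonance := fun y => exists_int_eq_two_pi_mul_of_periodic_ansatz (y := y) hpper hψper1
    (fun x => (hform x).1)
  refine ⟨resonance, fun hnone => hnone ?_⟩
  obtain ⟨x₀, hdiff, hne⟩ : ∃ x, DifferentiableAt ℝ ψ x ∧ ψ x ≠ 0 := by
    by_contra! h
    exact hψ0 (hψdiff.mono h)
  refine hasNonzeroPlateau_of_eventually_mem_countable (hU.continuous_deriv le_rfl)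
    (countable_range fun m : ℤ => lam / (2 * Real.pi * m))
    ((eventually_ne_zero_along_streamlines hdiff.continuousAt hne p).mono fun s hs => ?_)
  have hform_s := hform (x₀.1, p x₀.1 - s)
  simp only [sub_sub_cancel] at hform_s
  have hU's : deriv U s ≠ 0 := fun h => hs (hform_s.2 h)
  have hθs : θ s ≠ 0 := fun h => hs (by rw [hform_s.1 hU's, h, mul_zero])
  obtain ⟨m, hm⟩ := resonance s hθs hU's
  have hm0 : 2 * Real.pi * m ≠ 0 := fun h => hlam (by rw [hm, h, zero_mul])
  exact ⟨⟨m, by simp only [hm, mul_div_cancel_left₀ _ hm0]⟩, hU's⟩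

/-- Example 6.3 (rigidity of eigenfunctions of percolating flows): if an `H¹(𝕋²)`
eigenfunction `ψ` of `u = (Ũ'(y), p'(x₁)Ũ'(y))`, `y = p(x₁) - x₂`, with eigenvalue
`iλ ≠ 0` has the form `ψ = e^{iλx₁/Ũ'(y)}θ(y)` where `Ũ'(y) ≠ 0` and `ψ = 0` where
`Ũ'(y) = 0`, then `λ/Ũ'(y) ∈ 2πℤ` wherever `θ(y) ≠ 0` and `Ũ'(y) ≠ 0`; consequently, if
`Ũ'` has no plateau on which it is a non-zero constant, no such eigenfunction exists. -/
theorem stmt_15 (p U : ℝ → ℝ)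
    (hp : ContDiff ℝ 1 p) (hpper : Function.Periodic p 1)
    (hU : ContDiff ℝ 1 U) (hUper : Function.Periodic U 1)
    (u : ℝ × ℝ → ℝ × ℝ)
    (hu : ∀ x : ℝ × ℝ, u x = (deriv U (p x.1 - x.2), deriv p x.1 * deriv U (p x.1 - x.2)))
    (lam : ℝ) (hlam : lam ≠ 0)
    (ψ : ℝ × ℝ → ℂ) (θ : ℝ → ℂ)
    (hψper1 : ∀ x₁ x₂ : ℝ, ψ (x₁ + 1, x₂) = ψ (x₁, x₂))
    (hψper2 : ∀ x₁ x₂ : ℝ, ψ (x₁, x₂ + 1) = ψ (x₁, x₂))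
    (hψdiff : ∀ᵐ x : ℝ × ℝ, DifferentiableAt ℝ ψ x)
    (hψL2 : MemLp ψ 2 (volume.restrict (Set.Ico (0 : ℝ) 1 ×ˢ Set.Ico (0 : ℝ) 1)))
    (hψH1 : MemLp (fun x => ‖fderiv ℝ ψ x‖) 2
      (volume.restrict (Set.Ico (0 : ℝ) 1 ×ˢ Set.Ico (0 : ℝ) 1)))
    (heig : ∀ᵐ x : ℝ × ℝ, fderiv ℝ ψ x (u x) = (Complex.I * lam) • ψ x)
    (hψ0 : ¬ (∀ᵐ x : ℝ × ℝ, ψ x = 0))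
    (hform : ∀ x : ℝ × ℝ,
      (deriv U (p x.1 - x.2) ≠ 0 →
        ψ x = Complex.exp (Complex.I * lam * x.1 / Complex.ofReal (deriv U (p x.1 - x.2))) *
          θ (p x.1 - x.2)) ∧
      (deriv U (p x.1 - x.2) = 0 → ψ x = 0)) :
    (∀ y : ℝ, θ y ≠ 0 → deriv U y ≠ 0 →
      ∃ m : ℤ, lam = 2 * Real.pi * m * deriv U y) ∧
    ((¬ ∃ a b : ℝ, a < b ∧ ∃ C : ℝ, C ≠ 0 ∧ ∀ s ∈ Set.Icc a b, deriv U s = C) → False) :=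
  stmt_15_general p U hpper hU lam hlam ψ θ hψper1 hψdiff hψ0 hform
end

section
/- Let f satisfy f(T) ≤ cT^α for some c > 0, α > 1, and let T^A solve T_t + Au·∇T = ΔT + f(T) on D with 0 ≤ T^A ≤ 1, dominating linear evolution φ^A solving φ_t + Au·∇φ = Δφ with the same initial datum. If I_A := ∫₀^∞ ‖φ^A(·,t)‖_∞^{α−1} dt satisfies c(α−1)I_A < 1, and if ‖φ^A(·,t)‖_∞ is bounded for t ∈ [0,τ) by 1, by δ on [τ, τ₀), and by C M t^{−1/2} for t ≥ τ₀ (with ‖T₀‖_{L¹} ≤ M, D = ℝ × 𝕋, α > 3), then I_A ≤ τ + τ₀ δ^{α−1} + (CM)^{α−1}·(2/(α−3))·τ₀^{−(α−3)/2}; in particular, I_A can be made smaller than (c(α−1))^{−1} by choosing τ, δ small and τ₀ large, uniformly in A for A large. -/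
/-!
Split `(0, ∞)` at `τ` and `τ₀`, bound `g^(α-1)` by `1`, by `δ^(α-1)` and by
`(CM)^(α-1) t^(-(α-1)/2)` on the three pieces, and integrate; the tail majorant is integrable
because `(α-1)/2 > 1`.
-/

open MeasureTheory
open scoped NNReal

/-- The Laplacian of a function on `ℝ²`. -/
noncomputable def lap2 (f : ℝ × ℝ → ℝ) (x : ℝ × ℝ) : ℝ :=
  fderiv ℝ (fun y => fderiv ℝ f y (1, 0)) x (1, 0) +
    fderiv ℝ (fun y => fderiv ℝ f y (0, 1)) x (0, 1)

open Set Real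

section PiecewiseBound

variable {g : ℝ → ℝ} {p : ℝ}

lemma setIntegral_rpow_le_measureReal_mul {s : Set ℝ} {b : ℝ} (hs : MeasurableSet s)
    (hs_fin : volume s ≠ ⊤) (hint : IntegrableOn (fun t => g t ^ p) s) (hp : 0 ≤ p)
    (hg0 : ∀ t ∈ s, 0 ≤ g t) (hgb : ∀ t ∈ s, g t ≤ b) :
    ∫ t in s, g t ^ p ≤ volume.real s * b ^ p := by
  calc ∫ t in s, g t ^ p ≤ ∫ _ in s, b ^ p :=
        setIntegral_mono_on hint (integrableOn_const hs_fin) hs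
          fun t ht => rpow_le_rpow (hg0 t ht) (hgb t ht) hp
    _ = volume.real s * b ^ p := by rw [setIntegral_const, smul_eq_mul]

lemma integral_Ioi_rpow_le_of_le_mul_rpow_neg_half {τ₀ K : ℝ} (hp : 2 < p) (hτ₀ : 0 < τ₀)
    (hK : 0 ≤ K) (hint : IntegrableOn (fun t => g t ^ p) (Ioi τ₀))
    (hg0 : ∀ t, 0 ≤ g t) (hgK : ∀ t, τ₀ ≤ t → g t ≤ K * t ^ (-(1 : ℝ) / 2)) :
    ∫ t in Ioi τ₀, g t ^ p ≤ K ^ p * (2 / (p - 2)) * τ₀ ^ (-(p - 2) / 2) := by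
  have hexp : -p / 2 < -1 := by linarith
  have hmajorant : ∀ t ∈ Ioi τ₀, g t ^ p ≤ K ^ p * t ^ (-p / 2) := fun t ht => by
    have ht0 : 0 < t := hτ₀.trans ht
    calc g t ^ p ≤ (K * t ^ (-(1 : ℝ) / 2)) ^ p := rpow_le_rpow (hg0 t) (hgK t ht.le) (by linarith)
      _ = K ^ p * t ^ (-p / 2) := by
        rw [mul_rpow hK (rpow_nonneg ht0.le _), ← rpow_mul ht0.le]
        ring_nf
  calc ∫ t in Ioi τ₀, g t ^ p ≤ ∫ t in Ioi τ₀, K ^ p * t ^ (-p / 2) :=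
        setIntegral_mono_on hint ((integrableOn_Ioi_rpow_of_lt hexp hτ₀).const_mul _)
          measurableSet_Ioi hmajorant
    _ = K ^ p * (2 / (p - 2)) * τ₀ ^ (-(p - 2) / 2) := by
        rw [integral_const_mul, integral_Ioi_rpow_of_lt hexp hτ₀,
          show -p / 2 + 1 = -(p - 2) / 2 by ring]
        field_simp [show p - 2 ≠ 0 by linarith, show 2 - p ≠ 0 by linarith]

lemma integral_Ioi_rpow_le_of_piecewise_bound {τ τ₀ δ K : ℝ} (hp : 2 < p)
    (hg0 : ∀ t, 0 ≤ g t) (hτ : 0 < τ) (hττ₀ : τ < τ₀) (hδ : 0 ≤ δ) (hK : 0 ≤ K)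
    (hg1 : ∀ t ∈ Ico 0 τ, g t ≤ 1) (hg2 : ∀ t ∈ Ico τ τ₀, g t ≤ δ)
    (hg3 : ∀ t, τ₀ ≤ t → g t ≤ K * t ^ (-(1 : ℝ) / 2)) :
    ∫ t in Ioi 0, g t ^ p ≤ τ + τ₀ * δ ^ p + K ^ p * (2 / (p - 2)) * τ₀ ^ (-(p - 2) / 2) := by
  have hτ₀ : 0 < τ₀ := hτ.trans hττ₀
  -- Without integrability the Bochner integral is `0`, and the right-hand side is nonnegative.
  by_cases hint : IntegrableOn (fun t => g t ^ p) (Ioi 0)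
  swap
  · rw [integral_undef hint]
    have : 0 ≤ 2 / (p - 2) := div_nonneg zero_le_two (by linarith)
    positivity
  have hint₁ := hint.mono_set fun t (ht : t ∈ Ioo 0 τ) => ht.1
  have hint₂ := hint.mono_set fun t (ht : t ∈ Ico τ τ₀) => hτ.trans_le ht.1
  have hint₃ := hint.mono_set fun t (ht : t ∈ Ioi τ₀) => hτ₀.trans ht
  have hsplit : ∫ t in Ioi 0, g t ^ p =
      (∫ t in Ioo 0 τ, g t ^ p) + (∫ t in Ico τ τ₀, g t ^ p) + ∫ t in Ioi τ₀, g t ^ p := by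
    rw [← Ioo_union_Ici_eq_Ioi hτ₀,
      setIntegral_union ((Iio_disjoint_Ici le_rfl).mono_left Ioo_subset_Iio_self)
        measurableSet_Ici (hint.mono_set Ioo_subset_Ioi_self)
        (hint.mono_set (Ici_subset_Ioi.mpr hτ₀)),
      integral_Ici_eq_integral_Ioi, ← Ioo_union_Ico_eq_Ioo hτ hττ₀.le,
      setIntegral_union ((Iio_disjoint_Ici le_rfl).mono Ioo_subset_Iio_self Ico_subset_Ici_self)
        measurableSet_Ico hint₁ hint₂]
  have hp0 : 0 ≤ p := by linarith
  have hI₁ : ∫ t in Ioo 0 τ, g t ^ p ≤ τ := by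
    simpa [hτ.le] using setIntegral_rpow_le_measureReal_mul measurableSet_Ioo
      measure_Ioo_lt_top.ne hint₁ hp0 (fun t _ => hg0 t) fun t ht => hg1 t (Ioo_subset_Ico_self ht)
  have hI₂ : ∫ t in Ico τ τ₀, g t ^ p ≤ τ₀ * δ ^ p := by
    refine (setIntegral_rpow_le_measureReal_mul measurableSet_Ico measure_Ico_lt_top.ne hint₂
      hp0 (fun t _ => hg0 t) hg2).trans ?_
    rw [Real.volume_real_Ico_of_le hττ₀.le]
    gcongr
    linarith
  have hI₃ := integral_Ioi_rpow_le_of_le_mul_rpow_neg_half hp hτ₀ hK hint₃ hg0 hg3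
  linarith

end PiecewiseBound

theorem stmt_18_general (α : ℝ) (hα : 3 < α)
    (φ : ℝ → ℝ × ℝ → ℝ)
    (M : ℝ) (hM : 0 ≤ M)
    (g : ℝ → ℝ) (hg : ∀ t, g t = (eLpNorm (φ t) ⊤ volume).toReal)
    (τ τ₀ δ C : ℝ) (hτ : 0 < τ) (hττ₀ : τ < τ₀)
    (hδ : 0 < δ) (hC : 0 < C)
    (hg1 : ∀ t ∈ Set.Ico (0 : ℝ) τ, g t ≤ 1)
    (hg2 : ∀ t ∈ Set.Ico τ τ₀, g t ≤ δ)
    (hg3 : ∀ t : ℝ, τ₀ ≤ t → g t ≤ C * M * t ^ (-(1 : ℝ) / 2)) :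
    (∫ t in Set.Ioi (0 : ℝ), g t ^ (α - 1)) ≤
      τ + τ₀ * δ ^ (α - 1) + (C * M) ^ (α - 1) * (2 / (α - 3)) * τ₀ ^ (-(α - 3) / 2) := by
  have hg0 : ∀ t, 0 ≤ g t := fun t => hg t ▸ ENNReal.toReal_nonneg
  have := integral_Ioi_rpow_le_of_piecewise_bound (p := α - 1) (by linarith) hg0 hτ hττ₀
    hδ.le (by positivity) hg1 hg2 hg3
  rwa [show α - 1 - 2 = α - 3 by ring] at this

/-- Quenching estimate for reactions without ignition cutoff (`f(T) ≤ cT^α`) on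
`D = ℝ × 𝕋` (functions on `ℝ²` periodic in the second variable): the piecewise bounds on
`g(t) = ‖φ^A(·,t)‖_∞` (by `1` on `[0,τ)`, by `δ` on `[τ,τ₀)`, and by `CMt^{-1/2}` for
`t ≥ τ₀`, with `‖T₀‖_{L¹} ≤ M` and `α > 3`) give
`I_A = ∫₀^∞ g^{α-1} ≤ τ + τ₀δ^{α-1} + (CM)^{α-1}·(2/(α-3))·τ₀^{-(α-3)/2}`. -/
theorem stmt_18 (c α : ℝ) (hc : 0 < c) (hα : 3 < α)
    (f : ℝ → ℝ) (hf : ∀ s ∈ Set.Icc (0 : ℝ) 1, f s ≤ c * s ^ α)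
    (u : ℝ × ℝ → ℝ × ℝ) (Ku : ℝ≥0) (hu : LipschitzWith Ku u)
    (huper : ∀ x : ℝ × ℝ, u (x + (0, 1)) = u x)
    (hdiv : ∀ᵐ x : ℝ × ℝ, (fderiv ℝ u x (1, 0)).1 + (fderiv ℝ u x (0, 1)).2 = 0)
    (A : ℝ) (T φ : ℝ → ℝ × ℝ → ℝ)
    (hTper : ∀ t (x : ℝ × ℝ), T t (x + (0, 1)) = T t x)
    (hφper : ∀ t (x : ℝ × ℝ), φ t (x + (0, 1)) = φ t x)
    (hTreg : ∀ t, ContDiff ℝ 2 (T t)) (hφreg : ∀ t, ContDiff ℝ 2 (φ t))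
    (hTt : ∀ (t : ℝ) (x : ℝ × ℝ), HasDerivAt (fun s => T s x)
      (lap2 (T t) x + f (T t x) - A * fderiv ℝ (T t) x (u x)) t)
    (hφt : ∀ (t : ℝ) (x : ℝ × ℝ), HasDerivAt (fun s => φ s x)
      (lap2 (φ t) x - A * fderiv ℝ (φ t) x (u x)) t)
    (hTrange : ∀ t x, T t x ∈ Set.Icc (0 : ℝ) 1)
    (hinit : T 0 = φ 0)
    (M : ℝ) (hM : 0 ≤ M)
    (hL1 : eLpNorm (φ 0) 1 (volume.restrict (Set.univ ×ˢ Set.Ico (0 : ℝ) 1))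
      ≤ ENNReal.ofReal M)
    (g : ℝ → ℝ) (hg : ∀ t, g t = (eLpNorm (φ t) ⊤ volume).toReal)
    (hIA : c * (α - 1) * (∫ t in Set.Ioi (0 : ℝ), g t ^ (α - 1)) < 1)
    (τ τ₀ δ C : ℝ) (hτ : 0 < τ) (hττ₀ : τ < τ₀) (hτ₀ : 1 < τ₀)
    (hδ : 0 < δ) (hC : 0 < C)
    (hg1 : ∀ t ∈ Set.Ico (0 : ℝ) τ, g t ≤ 1)
    (hg2 : ∀ t ∈ Set.Ico τ τ₀, g t ≤ δ)
    (hg3 : ∀ t : ℝ, τ₀ ≤ t → g t ≤ C * M * t ^ (-(1 : ℝ) / 2)) :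
    (∫ t in Set.Ioi (0 : ℝ), g t ^ (α - 1)) ≤
      τ + τ₀ * δ ^ (α - 1) + (C * M) ^ (α - 1) * (2 / (α - 3)) * τ₀ ^ (-(α - 3) / 2) :=
  stmt_18_general α hα φ M hM g hg τ τ₀ δ C hτ hττ₀ hδ hC hg1 hg2 hg3
end
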